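/- arXiv:2511.03654 — 5 statements merged into one kernel-verified Lean document; each statement's English description precedes it below -/
import Mathlib

section
/- Let H be a complex Hilbert space and (a_q)_{q∈ℤ³} a family of bounded operators on H satisfying the CAR. Then for all k, ℓ ∈ ℤ³∖{0}, p ∈ L_k and q ∈ L_ℓ: [b_p(k), b_q(ℓ)] = 0, [b_p*(k), b_q*(ℓ)] = 0, and [b_p(k), b_q*(ℓ)] = δ_{p,q}·δ_{k,ℓ}·Id + ε_{p,q}(k,ℓ), where ε_{p,q}(k,ℓ) := −( δ_{p,q}·a*_{q−ℓ} a_{p−k} + δ_{p−k,q−ℓ}·a_q* a_p ). Moreover the error operator satisfies ε_{p,q}(ℓ,k) = (ε_{q,p}(k,ℓ))* and ε_{p,p}(k,k) ≤ 0 as a self-adjoint operator. -/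
open scoped BigOperators
open MeasureTheory

noncomputable section

attribute [local instance] Classical.propDecidable

/-- The momentum lattice `ℤ³`. -/
abbrev Z3 : Type := Fin 3 → ℤ

/-- Squared Euclidean norm `|p|²` of an integer vector, as a real number. -/
def nsq (p : Z3) : ℝ := ∑ i, ((p i : ℝ)) ^ 2

/-- The Fermi ball `B_F = {k ∈ ℤ³ : |k| ≤ k_F}`. -/
def BF (kF : ℝ) : Set Z3 := {k | nsq k ≤ kF ^ 2}

/-- The lens `L_ℓ = B_F^c ∩ (B_F + ℓ)`. -/
def lens (kF : ℝ) (ℓ : Z3) : Set Z3 := {p | p ∉ BF kF ∧ p - ℓ ∈ BF kF}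

/-- The excitation energy `λ_{ℓ,p} = (|p|² − |p−ℓ|²)/2`. -/
def lam (ℓ p : Z3) : ℝ := (nsq p - nsq (p - ℓ)) / 2

/-- The energy gap `e(q) = | |q|² − min_{p ∈ B_F^c} |p|² + 1/2 |`. -/
def efun (kF : ℝ) (q : Z3) : ℝ := |nsq q - sInf (nsq '' (BF kF)ᶜ) + 1 / 2|

variable {H : Type*} [NormedAddCommGroup H] [InnerProductSpace ℂ H] [CompleteSpace H]

local postfix:max "†" => ContinuousLinearMap.adjoint

local notation "⟪" x ", " y "⟫" => @inner ℂ _ _ x y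

/-- The canonical anticommutation relations for a family of bounded operators. -/
def CAR (a : Z3 → H →L[ℂ] H) : Prop :=
  (∀ q q' : Z3, a q * a q' + a q' * a q = 0) ∧
  (∀ q q' : Z3, a q * (a q')† + (a q')† * a q = if q = q' then 1 else 0)

/-- The pair annihilation operator `b_p(k) = a_{p−k} a_p`. -/
def bop (a : Z3 → H →L[ℂ] H) (k p : Z3) : H →L[ℂ] H := a (p - k) * a p

/-- The pair creation operator `b_p^*(k) = a_p^* a_{p−k}^*`. -/
def bopS (a : Z3 → H →L[ℂ] H) (k p : Z3) : H →L[ℂ] H := (a p)† * (a (p - k))†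

/-- The quasi-bosonic commutation error `ε_{p,q}(k,ℓ)`. -/
def epsOp (a : Z3 → H →L[ℂ] H) (k ℓ p q : Z3) : H →L[ℂ] H :=
  -((if p = q then (1 : ℂ) else 0) • ((a (q - ℓ))† * a (p - k))
    + (if p - k = q - ℓ then (1 : ℂ) else 0) • ((a q)† * a p))

/-!
Every pair commutator is reduced to the CAR by moving one creation operator at a time past
the annihilation operators. Each such move either anticommutes or produces a Kronecker delta;
for pair operators indexed by lenses, the deltas `δ_{p,q−ℓ}` and `δ_{p−k,q}` vanish because
`p ∉ B_F ∋ q − ℓ` and `q ∉ B_F ∋ p − k`, so only `δ_{p,q}` and `δ_{p−k,q−ℓ}` survive.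
-/

section Anticommutators

variable {R : Type*} [Ring R]

theorem commute_mul_mul_of_anticomm {x y u v : R}
    (hxu : x * u + u * x = 0) (hxv : x * v + v * x = 0)
    (hyu : y * u + u * y = 0) (hyv : y * v + v * y = 0) :
    Commute (x * y) (u * v) := by
  have hxu := eq_neg_of_add_eq_zero_left hxu
  have hxv := eq_neg_of_add_eq_zero_left hxv
  have hyu := eq_neg_of_add_eq_zero_left hyu
  have hyv := eq_neg_of_add_eq_zero_left hyv
  calc x * y * (u * v) = x * (y * u) * v := by noncomm_ring
    _ = -((x * u) * (y * v)) := by rw [hyu]; noncomm_ring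
    _ = -(u * (x * v) * y) := by rw [hxu, hyv]; noncomm_ring
    _ = u * v * (x * y) := by rw [hxv]; noncomm_ring

theorem mul_mul_sub_mul_mul_of_anticomm {𝕜 : Type*} [CommRing 𝕜] [Algebra 𝕜 R]
    {A B C D : R} {e₁ e₂ : 𝕜}
    (hBC : B * C + C * B = e₁ • 1) (hAD : A * D + D * A = e₂ • 1)
    (hAC : A * C + C * A = 0) (hBD : B * D + D * B = 0) :
    A * B * (C * D) - C * D * (A * B) = (e₁ * e₂) • 1 - (e₁ • (D * A) + e₂ • (C * B)) := by
  have hBC := eq_sub_of_add_eq hBC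
  have hAD := eq_sub_of_add_eq hAD
  have hAC := eq_neg_of_add_eq_zero_left hAC
  have hBD := eq_neg_of_add_eq_zero_left hBD
  calc A * B * (C * D) - C * D * (A * B)
      = A * (B * C) * D - C * D * (A * B) := by noncomm_ring
    _ = e₁ • (A * D) - (A * C) * (B * D) - C * D * (A * B) := by
      rw [hBC]; simp only [mul_sub, sub_mul, mul_smul_comm, smul_mul_assoc, mul_one]; noncomm_ring
    _ = e₁ • (A * D) - C * (A * D) * B - C * D * (A * B) := by rw [hAC, hBD]; noncomm_ring
    _ = (e₁ * e₂) • 1 - (e₁ • (D * A) + e₂ • (C * B)) := by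
      rw [hAD]
      simp only [mul_sub, sub_mul, mul_smul_comm, smul_mul_assoc, mul_one, smul_sub,
        smul_smul]
      noncomm_ring

end Anticommutators

namespace CAR

variable {a : Z3 → H →L[ℂ] H}

theorem adjoint_anticomm (h : CAR a) (s t : Z3) :
    (a s)† * (a t)† + (a t)† * (a s)† = 0 := by
  simpa only [star_add, star_mul, ContinuousLinearMap.star_eq_adjoint, star_zero]
    using congrArg star (h.1 t s)

theorem anticomm_adjoint (h : CAR a) (s t : Z3) :
    a s * (a t)† + (a t)† * a s = (if s = t then (1 : ℂ) else 0) • 1 := by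
  rw [h.2 s t, ite_smul, one_smul, zero_smul]

theorem anticomm_adjoint_of_ne (h : CAR a) {s t : Z3} (hst : s ≠ t) :
    a s * (a t)† + (a t)† * a s = 0 := by
  rw [h.2 s t, if_neg hst]

end CAR

section PairOperators

variable {a : Z3 → H →L[ℂ] H}

theorem ne_sub_of_mem_lens {kF : ℝ} {k ℓ p q : Z3} (hp : p ∈ lens kF k) (hq : q ∈ lens kF ℓ) :
    p ≠ q - ℓ :=
  fun h => hp.1 (h ▸ hq.2)

theorem commute_bop (h : CAR a) (k ℓ p q : Z3) : Commute (bop a k p) (bop a ℓ q) :=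
  commute_mul_mul_of_anticomm (h.1 _ _) (h.1 _ _) (h.1 _ _) (h.1 _ _)

theorem commute_bopS (h : CAR a) (k ℓ p q : Z3) : Commute (bopS a k p) (bopS a ℓ q) :=
  commute_mul_mul_of_anticomm (h.adjoint_anticomm _ _) (h.adjoint_anticomm _ _)
    (h.adjoint_anticomm _ _) (h.adjoint_anticomm _ _)

theorem bop_mul_bopS_sub_bopS_mul_bop (h : CAR a) {k ℓ p q : Z3}
    (hp : p ≠ q - ℓ) (hq : p - k ≠ q) :
    bop a k p * bopS a ℓ q - bopS a ℓ q * bop a k p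
      = (if p = q ∧ k = ℓ then (1 : H →L[ℂ] H) else 0) + epsOp a k ℓ p q := by
  have hδ : (p = q ∧ p - k = q - ℓ) ↔ (p = q ∧ k = ℓ) :=
    and_congr_right fun hpq => by rw [hpq, sub_right_inj]
  rw [bop, bopS, mul_mul_sub_mul_mul_of_anticomm (h.anticomm_adjoint p q)
    (h.anticomm_adjoint (p - k) (q - ℓ)) (h.anticomm_adjoint_of_ne hq)
    (h.anticomm_adjoint_of_ne hp), epsOp, sub_eq_add_neg, ite_zero_mul_ite_zero, one_mul,
    ite_smul, one_smul, zero_smul, if_congr hδ rfl rfl]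

theorem epsOp_swap_eq_adjoint (k ℓ p q : Z3) :
    epsOp a ℓ k p q = (epsOp a k ℓ q p)† := by
  simp only [epsOp, ← ContinuousLinearMap.star_eq_adjoint, star_neg, star_add, star_smul,
    star_mul, star_star, apply_ite star, star_one, star_zero, @eq_comm _ q p,
    @eq_comm _ (q - k) (p - ℓ)]

theorem isPositive_neg_epsOp_self (k p : Z3) :
    (-(epsOp a k k p p)).IsPositive := by
  simp only [epsOp, if_pos, neg_neg, one_smul]
  exact (a (p - k)).isPositive_adjoint_comp_self.add (a p).isPositive_adjoint_comp_self

end PairOperators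

theorem stmt4_general {H : Type*} [NormedAddCommGroup H] [InnerProductSpace ℂ H] [CompleteSpace H]
    (kF : ℝ) (a : Z3 → H →L[ℂ] H) (hCAR : CAR a) :
    ∀ k : Z3, k ≠ 0 → ∀ ℓ : Z3, ℓ ≠ 0 → ∀ p ∈ lens kF k, ∀ q ∈ lens kF ℓ,
      (bop a k p * bop a ℓ q - bop a ℓ q * bop a k p = 0) ∧
      (bopS a k p * bopS a ℓ q - bopS a ℓ q * bopS a k p = 0) ∧
      (bop a k p * bopS a ℓ q - bopS a ℓ q * bop a k p
        = (if p = q ∧ k = ℓ then (1 : H →L[ℂ] H) else 0) + epsOp a k ℓ p q) ∧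
      (epsOp a ℓ k p q = (epsOp a k ℓ q p)†) ∧
      (-(epsOp a k k p p)).IsPositive := by
  intro k _ ℓ _ p hp q hq
  exact ⟨sub_eq_zero.mpr (commute_bop hCAR k ℓ p q).eq,
    sub_eq_zero.mpr (commute_bopS hCAR k ℓ p q).eq,
    bop_mul_bopS_sub_bopS_mul_bop hCAR (ne_sub_of_mem_lens hp hq) (ne_sub_of_mem_lens hq hp).symm,
    epsOp_swap_eq_adjoint k ℓ p q, isPositive_neg_epsOp_self k p⟩

/-- Approximate CCR for the pair operators (Lemma `lem:paircomm`). -/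
theorem stmt4 {H : Type*} [NormedAddCommGroup H] [InnerProductSpace ℂ H] [CompleteSpace H]
    (kF : ℝ) (hkF : 0 < kF) (a : Z3 → H →L[ℂ] H) (hCAR : CAR a) :
    ∀ k : Z3, k ≠ 0 → ∀ ℓ : Z3, ℓ ≠ 0 → ∀ p ∈ lens kF k, ∀ q ∈ lens kF ℓ,
      (bop a k p * bop a ℓ q - bop a ℓ q * bop a k p = 0) ∧
      (bopS a k p * bopS a ℓ q - bopS a ℓ q * bopS a k p = 0) ∧
      (bop a k p * bopS a ℓ q - bopS a ℓ q * bop a k p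
        = (if p = q ∧ k = ℓ then (1 : H →L[ℂ] H) else 0) + epsOp a k ℓ p q) ∧
      (epsOp a ℓ k p q = (epsOp a k ℓ q p)†) ∧
      (-(epsOp a k k p p)).IsPositive :=
  stmt4_general kF a hCAR
end
end

section
/- Let H be a complex Hilbert space and (a_q)_{q∈ℤ³} a CAR family of bounded operators on H. Let A = (A(ℓ)) be a family of symmetric matrices on the lenses. Then for every Ψ ∈ H: |⟨Ψ, Q₁(A) Ψ⟩| ≤ 2 ( Σ_{ℓ∈ℤ³∖{0}} ‖A(ℓ)‖_{HS} ) · Σ_{q∈ℤ³} ‖a_q Ψ‖² and |⟨Ψ, Q₂(A) Ψ⟩| ≤ 2 ( Σ_{ℓ∈ℤ³∖{0}} ‖A(ℓ)‖_{HS} ) · ( Σ_{q∈ℤ³} ‖a_q Ψ‖² + ‖Ψ‖² ), where Σ_{q∈ℤ³} ‖a_q Ψ‖² ∈ [0,∞] is the (possibly infinite) sum of nonnegative terms, i.e., the expectation ⟨Ψ, 𝒩 Ψ⟩ of the number operator. -/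
open scoped BigOperators
open MeasureTheory

noncomputable section

attribute [local instance] Classical.propDecidable

variable {H : Type*} [NormedAddCommGroup H] [InnerProductSpace ℂ H] [CompleteSpace H]

local postfix:max "†" => ContinuousLinearMap.adjoint

local notation "⟪" x ", " y "⟫" => @inner ℂ _ _ x y

/-- `Q₁` for a family of complex symmetric matrices on the lenses. -/
def Q1c (kF : ℝ) (a : Z3 → H →L[ℂ] H) (A : Z3 → Z3 → Z3 → ℂ) : H →L[ℂ] H :=
  (2 : ℂ) • ∑' ℓ : Z3, ∑' r : Z3, ∑' s : Z3,
    (if ℓ ≠ 0 ∧ r ∈ lens kF ℓ ∧ s ∈ lens kF ℓ then A ℓ r s else 0) •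
      (bopS a ℓ r * bop a ℓ s)

/-- `Q₂` for a family of complex symmetric matrices on the lenses. -/
def Q2c (kF : ℝ) (a : Z3 → H →L[ℂ] H) (A : Z3 → Z3 → Z3 → ℂ) : H →L[ℂ] H :=
  ∑' ℓ : Z3, ∑' r : Z3, ∑' s : Z3,
    (if ℓ ≠ 0 ∧ r ∈ lens kF ℓ ∧ s ∈ lens kF ℓ then A ℓ r s else 0) •
      (bop a ℓ r * bop a (-ℓ) (-s) + bopS a (-ℓ) (-s) * bopS a ℓ r)

/-- The Hilbert–Schmidt norm of `A(ℓ)` on the lens `L_ℓ`. -/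
def normHSc (kF : ℝ) (ℓ : Z3) (A : Z3 → Z3 → ℂ) : ℝ :=
  Real.sqrt (∑' rt : Z3 × Z3,
    if rt.1 ∈ lens kF ℓ ∧ rt.2 ∈ lens kF ℓ then ‖A rt.1 rt.2‖ ^ 2 else 0)

/-!
Every `ℓ`-summand of `Q₁` and `Q₂` is a finite sum over the lens `L_ℓ`, so it suffices to bound
each summand by `‖A(ℓ)‖_HS` times `⟨Ψ, 𝒩 Ψ⟩` (plus `‖Ψ‖²` for `Q₂`). For `Q₁`,
`⟨Ψ, Σ A_rs b_r* b_s Ψ⟩ = Σ A_rs ⟨b_r Ψ, b_s Ψ⟩`, and Cauchy–Schwarz with `‖b_r Ψ‖ ≤ ‖a_r Ψ‖`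
suffices. For `Q₂` the creation operators must be controlled: on the lens `r - ℓ ∈ B_F` never
equals `r' ∉ B_F`, so the CAR give `[b_r(ℓ), b_{r'}*(ℓ)] = δ_{r r'} (a_{r-ℓ} a_{r-ℓ}* - a_r* a_r)`,
whence `‖Σ_r g_r b_r* Ψ‖² ≤ ‖g‖² (‖Ψ‖² + ⟨Ψ, 𝒩 Ψ⟩)`; Cauchy–Schwarz and AM–GM finish.
-/

lemma BF_finite (kF : ℝ) : (BF kF).Finite := by
  refine (Set.finite_Icc (fun _ => -⌈|kF|⌉ : Z3) (fun _ => ⌈|kF|⌉)).subset fun k hk => ?_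
  have hk_abs : ∀ i, |k i| ≤ ⌈|kF|⌉ := fun i => by
    have hsq : ((k i : ℝ)) ^ 2 ≤ kF ^ 2 :=
      (Finset.single_le_sum (fun j _ => sq_nonneg ((k j : ℝ))) (Finset.mem_univ i)).trans hk
    have hle : |(k i : ℝ)| ≤ ⌈|kF|⌉ := (sq_le_sq.1 hsq).trans (Int.le_ceil _)
    exact_mod_cast hle
  exact ⟨fun i => neg_le_of_abs_le (hk_abs i), fun i => le_of_abs_le (hk_abs i)⟩

lemma lens_finite (kF : ℝ) (ℓ : Z3) : (lens kF ℓ).Finite :=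
  ((BF_finite kF).image (· + ℓ)).subset fun p hp => ⟨p - ℓ, hp.2, sub_add_cancel p ℓ⟩

def lensFinset (kF : ℝ) (ℓ : Z3) : Finset Z3 := (lens_finite kF ℓ).toFinset

@[simp]
lemma mem_lensFinset {kF : ℝ} {ℓ r : Z3} : r ∈ lensFinset kF ℓ ↔ r ∈ lens kF ℓ :=
  Set.Finite.mem_toFinset _

lemma sub_ne_of_mem_lens {kF : ℝ} {ℓ r r' : Z3} (hr : r ∈ lens kF ℓ) (hr' : r' ∈ lens kF ℓ) :
    r - ℓ ≠ r' :=
  fun h => hr'.1 (h ▸ hr.2)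

lemma ne_zero_of_mem_lens {kF : ℝ} {ℓ r : Z3} (hr : r ∈ lens kF ℓ) : ℓ ≠ 0 := by
  rintro rfl
  exact sub_ne_of_mem_lens hr hr (sub_zero r)

lemma tsum_tsum_ite_lens {M : Type*} [AddCommMonoid M] [TopologicalSpace M] [Module ℂ M]
    (kF : ℝ) (ℓ : Z3) (c : Z3 → Z3 → ℂ) (G : Z3 → Z3 → M) :
    ∑' r, ∑' s, (if ℓ ≠ 0 ∧ r ∈ lens kF ℓ ∧ s ∈ lens kF ℓ then c r s else 0) • G r s
      = ∑ r ∈ lensFinset kF ℓ, ∑ s ∈ lensFinset kF ℓ, c r s • G r s := by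
  have hterm : ∀ r s, (if ℓ ≠ 0 ∧ r ∈ lens kF ℓ ∧ s ∈ lens kF ℓ then c r s else 0) • G r s
      = if r ∈ lensFinset kF ℓ ∧ s ∈ lensFinset kF ℓ then c r s • G r s else 0 := fun r s => by
    by_cases hrs : r ∈ lens kF ℓ ∧ s ∈ lens kF ℓ
    · simp [hrs, ne_zero_of_mem_lens hrs.1]
    · simp [hrs]
  simp_rw [hterm, ite_and]
  rw [tsum_eq_sum (s := lensFinset kF ℓ) fun r hr => by simp only [if_neg hr, tsum_zero]]
  refine Finset.sum_congr rfl fun r hr => ?_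
  simp only [if_pos hr]
  rw [tsum_eq_sum (s := lensFinset kF ℓ) fun s hs => if_neg hs]
  exact Finset.sum_congr rfl fun s hs => if_pos hs

lemma normHSc_eq (kF : ℝ) (ℓ : Z3) (B : Z3 → Z3 → ℂ) :
    normHSc kF ℓ B = √(∑ r ∈ lensFinset kF ℓ, ∑ s ∈ lensFinset kF ℓ, ‖B r s‖ ^ 2) := by
  rw [normHSc, ← Finset.sum_product',
    tsum_eq_sum (s := lensFinset kF ℓ ×ˢ lensFinset kF ℓ) fun rt hrt =>
      if_neg fun h => hrt (Finset.mem_product.2 (by simpa using h))]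
  exact congrArg _ (Finset.sum_congr rfl fun rt hrt => if_pos (by simpa using hrt))

lemma Q1c_eq_tsum (kF : ℝ) (a : Z3 → H →L[ℂ] H) (A : Z3 → Z3 → Z3 → ℂ) :
    Q1c kF a A = (2 : ℂ) • ∑' ℓ, ∑ r ∈ lensFinset kF ℓ, ∑ s ∈ lensFinset kF ℓ,
      A ℓ r s • (bopS a ℓ r * bop a ℓ s) := by
  simp only [Q1c, tsum_tsum_ite_lens]

lemma Q2c_eq_tsum (kF : ℝ) (a : Z3 → H →L[ℂ] H) (A : Z3 → Z3 → Z3 → ℂ) :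
    Q2c kF a A = ∑' ℓ, ∑ r ∈ lensFinset kF ℓ, ∑ s ∈ lensFinset kF ℓ,
      A ℓ r s • (bop a ℓ r * bop a (-ℓ) (-s) + bopS a (-ℓ) (-s) * bopS a ℓ r) := by
  simp only [Q2c, tsum_tsum_ite_lens]

section InnerProduct

variable {ι 𝕜 E : Type*} [RCLike 𝕜] [NormedAddCommGroup E] [InnerProductSpace 𝕜 E]

lemma norm_sum_inner_le (T : Finset ι) (x y : ι → E) :
    ‖∑ s ∈ T, inner 𝕜 (x s) (y s)‖ ≤ √(∑ s ∈ T, ‖x s‖ ^ 2) * √(∑ s ∈ T, ‖y s‖ ^ 2) :=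
  (norm_sum_le _ _).trans <| (Finset.sum_le_sum fun s _ => norm_inner_le_norm (x s) (y s)).trans
    (Real.sum_mul_le_sqrt_mul_sqrt T _ _)

lemma norm_sum_sum_mul_inner_le (T : Finset ι) (M : ι → ι → 𝕜) (u v : ι → E) :
    ‖∑ r ∈ T, ∑ s ∈ T, M r s * inner 𝕜 (u r) (v s)‖
      ≤ √(∑ r ∈ T, ∑ s ∈ T, ‖M r s‖ ^ 2) * (√(∑ r ∈ T, ‖u r‖ ^ 2) * √(∑ s ∈ T, ‖v s‖ ^ 2)) := by
  have hterm : ‖∑ r ∈ T, ∑ s ∈ T, M r s * inner 𝕜 (u r) (v s)‖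
      ≤ ∑ p ∈ T ×ˢ T, ‖M p.1 p.2‖ * (‖u p.1‖ * ‖v p.2‖) := by
    rw [← Finset.sum_product']
    refine (norm_sum_le _ _).trans (Finset.sum_le_sum fun p _ => ?_)
    rw [norm_mul]
    gcongr
    exact norm_inner_le_norm _ _
  refine hterm.trans ((Real.sum_mul_le_sqrt_mul_sqrt _ _ _).trans_eq ?_)
  simp_rw [mul_pow, Finset.sum_product, ← Finset.mul_sum, ← Finset.sum_mul,
    Real.sqrt_mul (Finset.sum_nonneg fun r _ => sq_nonneg ‖u r‖)]

lemma enorm_inner_tsum_apply_le (F : ι → E →L[𝕜] E) (x : E) :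
    ‖inner 𝕜 x ((∑' i, F i) x)‖ₑ ≤ ∑' i, ‖inner 𝕜 x (F i x)‖ₑ := by
  by_cases hF : Summable F
  · have := ((innerSL 𝕜 x).comp (ContinuousLinearMap.apply 𝕜 E x)).map_tsum hF
    simp only [ContinuousLinearMap.comp_apply, ContinuousLinearMap.apply_apply,
      innerSL_apply_apply] at this
    exact this ▸ enorm_tsum_le_tsum_enorm
  · simp [tsum_eq_zero_of_not_summable hF]

end InnerProduct

lemma ofReal_sum_norm_sq_le_tsum {ι κ E : Type*} [SeminormedAddCommGroup E] (f : κ → E)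
    {g : ι → κ} (hg : Function.Injective g) (T : Finset ι) :
    ENNReal.ofReal (∑ i ∈ T, ‖f (g i)‖ ^ 2) ≤ ∑' k, ‖f k‖ₑ ^ 2 := by
  rw [ENNReal.ofReal_sum_of_nonneg fun _ _ => sq_nonneg _]
  simp_rw [ENNReal.ofReal_pow (norm_nonneg _), ofReal_norm]
  exact (ENNReal.sum_le_tsum T).trans (ENNReal.tsum_comp_le_tsum_of_injective hg _)

lemma mul_mul_sub_mul_mul {R : Type*} [Ring R] (x y u v : R) :
    x * y * (u * v) - u * v * (x * y)
      = x * (y * u + u * y) * v - (x * u + u * x) * y * v + u * x * (y * v + v * y)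
        - u * (x * v + v * x) * y := by
  noncomm_ring

lemma bop_adjoint (a : Z3 → H →L[ℂ] H) (k p : Z3) : (bop a k p)† = bopS a k p := by
  rw [bop, bopS, ← ContinuousLinearMap.star_eq_adjoint, star_mul,
    ContinuousLinearMap.star_eq_adjoint, ContinuousLinearMap.star_eq_adjoint]

lemma bopS_adjoint (a : Z3 → H →L[ℂ] H) (k p : Z3) : (bopS a k p)† = bop a k p := by
  rw [← bop_adjoint, ContinuousLinearMap.adjoint_adjoint]

lemma re_inner_adjoint_mul_apply (X : H →L[ℂ] H) (x : H) :
    RCLike.re ⟪x, (X† * X) x⟫ = ‖X x‖ ^ 2 :=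
  (X.apply_norm_sq_eq_inner_adjoint_right x).symm

lemma re_inner_mul_adjoint_apply (X : H →L[ℂ] H) (x : H) :
    RCLike.re ⟪x, (X * X†) x⟫ = ‖X† x‖ ^ 2 := by
  simpa using re_inner_adjoint_mul_apply X† x

lemma inner_sum_sum_smul_adjoint_mul_apply {ι : Type*} (T : Finset ι) (M : ι → ι → ℂ)
    (X : ι → H →L[ℂ] H) (x : H) :
    ⟪x, (∑ r ∈ T, ∑ s ∈ T, M r s • ((X r)† * X s)) x⟫
      = ∑ r ∈ T, ∑ s ∈ T, M r s * ⟪X r x, X s x⟫ := by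
  simp only [sum_apply, smul_apply, inner_sum, inner_smul_right, mul_apply_eq_comp,
    ContinuousLinearMap.adjoint_inner_right]

lemma inner_sum_sum_smul_adjoint_mul_add_apply {ι : Type*} (T : Finset ι) (M : ι → ι → ℂ)
    (X D : ι → H →L[ℂ] H) (x : H) :
    ⟪x, (∑ r ∈ T, ∑ s ∈ T, M r s • ((X r)† * D s + (D s)† * X r)) x⟫
      = ∑ s ∈ T, ⟪(∑ r ∈ T, starRingEnd ℂ (M r s) • X r) x, D s x⟫
        + ∑ s ∈ T, ⟪D s x, (∑ r ∈ T, M r s • X r) x⟫ := by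
  simp only [sum_apply, smul_apply, add_apply, mul_apply_eq_comp, inner_sum, sum_inner,
    inner_add_right, inner_smul_right, inner_smul_left, ContinuousLinearMap.adjoint_inner_right,
    Complex.conj_conj, mul_add, Finset.sum_add_distrib]
  rw [Finset.sum_comm (f := fun r s => M r s * ⟪X r x, D s x⟫),
    Finset.sum_comm (f := fun r s => M r s * ⟪D s x, X r x⟫)]

namespace CAR

variable {a : Z3 → H →L[ℂ] H}

lemma norm_apply_sq_add_norm_adjoint_apply_sq (h : CAR a) (q : Z3) (x : H) :
    ‖a q x‖ ^ 2 + ‖(a q)† x‖ ^ 2 = ‖x‖ ^ 2 := by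
  rw [← re_inner_adjoint_mul_apply, ← re_inner_adjoint_mul_apply,
    ContinuousLinearMap.adjoint_adjoint, ← map_add, ← inner_add_right,
    ← add_apply, add_comm, h.2 q q, if_pos rfl,
    one_apply_eq_self, inner_self_eq_norm_sq]

lemma norm_apply_le (h : CAR a) (q : Z3) (x : H) : ‖a q x‖ ≤ ‖x‖ :=
  (pow_le_pow_iff_left₀ (norm_nonneg _) (norm_nonneg _) two_ne_zero).1 <| by
    nlinarith [h.norm_apply_sq_add_norm_adjoint_apply_sq q x]

lemma norm_adjoint_apply_le (h : CAR a) (q : Z3) (x : H) : ‖(a q)† x‖ ≤ ‖x‖ :=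
  (pow_le_pow_iff_left₀ (norm_nonneg _) (norm_nonneg _) two_ne_zero).1 <| by
    nlinarith [h.norm_apply_sq_add_norm_adjoint_apply_sq q x]

lemma norm_bop_apply_le (h : CAR a) (k p : Z3) (x : H) : ‖bop a k p x‖ ≤ ‖a p x‖ :=
  h.norm_apply_le (p - k) (a p x)

lemma bop_mul_bopS_sub_bopS_mul_bop (h : CAR a) {ℓ r r' : Z3} (h₁ : r - ℓ ≠ r')
    (h₂ : r' - ℓ ≠ r) :
    bop a ℓ r * bopS a ℓ r' - bopS a ℓ r' * bop a ℓ r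
      = if r = r' then a (r - ℓ) * (a (r - ℓ))† - (a r)† * a r else 0 := by
  rw [bop, bopS, mul_mul_sub_mul_mul, h.2 r r', h.2 (r - ℓ) r', h.2 r (r' - ℓ),
    h.2 (r - ℓ) (r' - ℓ), if_neg h₁, if_neg (Ne.symm h₂)]
  by_cases hrr' : r = r'
  · subst hrr'
    simp
  · rw [if_neg hrr', if_neg hrr', if_neg (sub_left_injective.ne hrr')]
    simp

lemma sum_smul_bop_commutator (h : CAR a) {ℓ : Z3} {T : Finset Z3}
    (hT : ∀ r ∈ T, ∀ r' ∈ T, r - ℓ ≠ r') (g : Z3 → ℂ) :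
    (∑ r ∈ T, starRingEnd ℂ (g r) • bop a ℓ r) * (∑ r ∈ T, g r • bopS a ℓ r)
        - (∑ r ∈ T, g r • bopS a ℓ r) * (∑ r ∈ T, starRingEnd ℂ (g r) • bop a ℓ r)
      = ∑ r ∈ T, ((‖g r‖ ^ 2 : ℝ) : ℂ) • (a (r - ℓ) * (a (r - ℓ))† - (a r)† * a r) := by
  simp only [Finset.sum_mul_sum, smul_mul_smul_comm]
  rw [Finset.sum_comm (f := fun i j => (g i * starRingEnd ℂ (g j)) • (bopS a ℓ i * bop a ℓ j)),
    ← Finset.sum_sub_distrib]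
  refine Finset.sum_congr rfl fun r hr => ?_
  rw [← Finset.sum_sub_distrib]
  calc ∑ r' ∈ T, ((starRingEnd ℂ (g r) * g r') • (bop a ℓ r * bopS a ℓ r')
        - (g r' * starRingEnd ℂ (g r)) • (bopS a ℓ r' * bop a ℓ r))
      = ∑ r' ∈ T, (starRingEnd ℂ (g r) * g r') •
          (if r = r' then a (r - ℓ) * (a (r - ℓ))† - (a r)† * a r else 0) :=
        Finset.sum_congr rfl fun r' hr' => by
          rw [mul_comm (g r'), ← smul_sub,
            h.bop_mul_bopS_sub_bopS_mul_bop (hT r hr r' hr') (hT r' hr' r hr)]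
    _ = _ := by simp [hr, RCLike.conj_mul]

lemma norm_sum_smul_bopS_apply_sq (h : CAR a) {ℓ : Z3} {T : Finset Z3}
    (hT : ∀ r ∈ T, ∀ r' ∈ T, r - ℓ ≠ r') (g : Z3 → ℂ) (Ψ : H) :
    ‖(∑ r ∈ T, g r • bopS a ℓ r) Ψ‖ ^ 2
      = ‖(∑ r ∈ T, starRingEnd ℂ (g r) • bop a ℓ r) Ψ‖ ^ 2
        + ∑ r ∈ T, ‖g r‖ ^ 2 * (‖(a (r - ℓ))† Ψ‖ ^ 2 - ‖a r Ψ‖ ^ 2) := by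
  set B := ∑ r ∈ T, starRingEnd ℂ (g r) • bop a ℓ r
  have hadj : B† = ∑ r ∈ T, g r • bopS a ℓ r := by
    simp only [B, map_sum, map_smulₛₗ, bop_adjoint, Complex.conj_conj]
  have hcomm := h.sum_smul_bop_commutator hT g
  rw [← hadj] at hcomm ⊢
  calc ‖B† Ψ‖ ^ 2 = RCLike.re ⟪Ψ, (B * B†) Ψ⟫ := (re_inner_mul_adjoint_apply B Ψ).symm
    _ = RCLike.re ⟪Ψ, (B† * B) Ψ⟫ + RCLike.re ⟪Ψ, (B * B† - B† * B) Ψ⟫ := by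
      rw [sub_apply, inner_sub_right, map_sub]
      ring
    _ = _ := by
      rw [re_inner_adjoint_mul_apply, hcomm]
      congr 1
      simp only [sum_apply, smul_apply, inner_sum, inner_smul_right, map_sum]
      refine Finset.sum_congr rfl fun r _ => ?_
      rw [← re_inner_mul_adjoint_apply, ← re_inner_adjoint_mul_apply, sub_apply, inner_sub_right]
      simp only [RCLike.re_to_complex, Complex.re_ofReal_mul, Complex.sub_re]

lemma norm_sum_smul_bopS_apply_sq_le (h : CAR a) {ℓ : Z3} {T : Finset Z3}
    (hT : ∀ r ∈ T, ∀ r' ∈ T, r - ℓ ≠ r') (g : Z3 → ℂ) (Ψ : H) :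
    ‖(∑ r ∈ T, g r • bopS a ℓ r) Ψ‖ ^ 2
      ≤ (∑ r ∈ T, ‖g r‖ ^ 2) * (‖Ψ‖ ^ 2 + ∑ r ∈ T, ‖a r Ψ‖ ^ 2) := by
  rw [h.norm_sum_smul_bopS_apply_sq hT]
  have hbop : ‖(∑ r ∈ T, starRingEnd ℂ (g r) • bop a ℓ r) Ψ‖ ≤ ∑ r ∈ T, ‖g r‖ * ‖a r Ψ‖ := by
    rw [sum_apply]
    refine (norm_sum_le _ _).trans (Finset.sum_le_sum fun r _ => ?_)
    rw [smul_apply, norm_smul, RCLike.norm_conj]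
    gcongr
    exact h.norm_bop_apply_le ℓ r Ψ
  have hdiag : ∑ r ∈ T, ‖g r‖ ^ 2 * (‖(a (r - ℓ))† Ψ‖ ^ 2 - ‖a r Ψ‖ ^ 2)
      ≤ (∑ r ∈ T, ‖g r‖ ^ 2) * ‖Ψ‖ ^ 2 := by
    rw [Finset.sum_mul]
    gcongr with r
    have hle := h.norm_adjoint_apply_le (r - ℓ) Ψ
    nlinarith [norm_nonneg ((a (r - ℓ))† Ψ), sq_nonneg ‖a r Ψ‖]
  calc _ ≤ (∑ r ∈ T, ‖g r‖ * ‖a r Ψ‖) ^ 2 + (∑ r ∈ T, ‖g r‖ ^ 2) * ‖Ψ‖ ^ 2 := by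
        gcongr
    _ ≤ (∑ r ∈ T, ‖g r‖ ^ 2) * (∑ r ∈ T, ‖a r Ψ‖ ^ 2) + (∑ r ∈ T, ‖g r‖ ^ 2) * ‖Ψ‖ ^ 2 := by
        gcongr
        exact Finset.sum_mul_sq_le_sq_mul_sq T _ _
    _ = _ := by ring

lemma norm_inner_sum_sum_smul_bopS_mul_bop_le (h : CAR a) (ℓ : Z3) (T : Finset Z3)
    (M : Z3 → Z3 → ℂ) (Ψ : H) :
    ‖⟪Ψ, (∑ r ∈ T, ∑ s ∈ T, M r s • (bopS a ℓ r * bop a ℓ s)) Ψ⟫‖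
      ≤ √(∑ r ∈ T, ∑ s ∈ T, ‖M r s‖ ^ 2) * ∑ r ∈ T, ‖a r Ψ‖ ^ 2 := by
  simp_rw [← bop_adjoint, inner_sum_sum_smul_adjoint_mul_apply]
  refine (norm_sum_sum_mul_inner_le T M _ _).trans ?_
  rw [Real.mul_self_sqrt (Finset.sum_nonneg fun r _ => sq_nonneg _)]
  gcongr with r
  exact h.norm_bop_apply_le ℓ r Ψ

lemma norm_inner_sum_sum_smul_bop_mul_bop_add_le (h : CAR a) {ℓ : Z3} {T : Finset Z3}
    (hT : ∀ r ∈ T, ∀ r' ∈ T, r - ℓ ≠ r') (M : Z3 → Z3 → ℂ) (Ψ : H) :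
    ‖⟪Ψ, (∑ r ∈ T, ∑ s ∈ T,
        M r s • (bop a ℓ r * bop a (-ℓ) (-s) + bopS a (-ℓ) (-s) * bopS a ℓ r)) Ψ⟫‖
      ≤ √(∑ r ∈ T, ∑ s ∈ T, ‖M r s‖ ^ 2)
        * (‖Ψ‖ ^ 2 + ∑ r ∈ T, ‖a r Ψ‖ ^ 2 + ∑ s ∈ T, ‖a (-s) Ψ‖ ^ 2) := by
  set S := ∑ r ∈ T, ∑ s ∈ T, ‖M r s‖ ^ 2
  set P := ‖Ψ‖ ^ 2 + ∑ r ∈ T, ‖a r Ψ‖ ^ 2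
  set m := ∑ s ∈ T, ‖a (-s) Ψ‖ ^ 2
  have hP : 0 ≤ P := by positivity
  have hm : 0 ≤ m := by positivity
  have hW : ∀ M' : Z3 → Z3 → ℂ, (∀ r s, ‖M' r s‖ = ‖M r s‖) →
      √(∑ s ∈ T, ‖(∑ r ∈ T, M' r s • bopS a ℓ r) Ψ‖ ^ 2) ≤ √S * √P := fun M' hM' => by
    rw [← Real.sqrt_mul (by positivity)]
    refine Real.sqrt_le_sqrt ?_
    simp only [S, ← hM']
    rw [Finset.sum_comm, Finset.sum_mul]
    exact Finset.sum_le_sum fun s _ => h.norm_sum_smul_bopS_apply_sq_le hT _ Ψ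
  have hD : √(∑ s ∈ T, ‖bop a (-ℓ) (-s) Ψ‖ ^ 2) ≤ √m :=
    Real.sqrt_le_sqrt (Finset.sum_le_sum fun s _ => by gcongr; exact h.norm_bop_apply_le _ _ Ψ)
  simp_rw [← bopS_adjoint a ℓ, ← bop_adjoint a (-ℓ), inner_sum_sum_smul_adjoint_mul_add_apply]
  calc _ ≤ _ := norm_add_le _ _
    _ ≤ √S * √P * √m + √m * (√S * √P) := by
      gcongr
      · exact (norm_sum_inner_le _ _ _).trans
          (mul_le_mul (hW _ fun r s => RCLike.norm_conj _) hD (by positivity) (by positivity))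
      · exact (norm_sum_inner_le _ _ _).trans
          (mul_le_mul hD (hW M fun _ _ => rfl) (by positivity) (by positivity))
    _ = √S * (2 * √P * √m) := by ring
    _ ≤ √S * (P + m) := by
      gcongr
      nlinarith [Real.sq_sqrt hP, Real.sq_sqrt hm, sq_nonneg (√P - √m)]

lemma enorm_inner_lens_sum_bopS_mul_bop_le (h : CAR a) (kF : ℝ) (ℓ : Z3)
    (B : Z3 → Z3 → ℂ) (Ψ : H) :
    ‖⟪Ψ, (∑ r ∈ lensFinset kF ℓ, ∑ s ∈ lensFinset kF ℓ, B r s • (bopS a ℓ r * bop a ℓ s)) Ψ⟫‖ₑ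
      ≤ ENNReal.ofReal (normHSc kF ℓ B) * ∑' q, ‖a q Ψ‖ₑ ^ 2 := by
  rw [← ofReal_norm, normHSc_eq]
  refine (ENNReal.ofReal_le_ofReal (h.norm_inner_sum_sum_smul_bopS_mul_bop_le ℓ _ B Ψ)).trans ?_
  rw [ENNReal.ofReal_mul (Real.sqrt_nonneg _)]
  gcongr
  exact ofReal_sum_norm_sq_le_tsum (fun q => a q Ψ) Function.injective_id _

lemma enorm_inner_lens_sum_bop_mul_bop_add_le (h : CAR a) (kF : ℝ) (ℓ : Z3)
    (B : Z3 → Z3 → ℂ) (Ψ : H) :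
    ‖⟪Ψ, (∑ r ∈ lensFinset kF ℓ, ∑ s ∈ lensFinset kF ℓ,
        B r s • (bop a ℓ r * bop a (-ℓ) (-s) + bopS a (-ℓ) (-s) * bopS a ℓ r)) Ψ⟫‖ₑ
      ≤ ENNReal.ofReal (normHSc kF ℓ B) * (2 * (∑' q, ‖a q Ψ‖ₑ ^ 2 + ‖Ψ‖ₑ ^ 2)) := by
  have hT : ∀ r ∈ lensFinset kF ℓ, ∀ r' ∈ lensFinset kF ℓ, r - ℓ ≠ r' := fun r hr r' hr' =>
    sub_ne_of_mem_lens (mem_lensFinset.1 hr) (mem_lensFinset.1 hr')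
  rw [← ofReal_norm, normHSc_eq]
  refine (ENNReal.ofReal_le_ofReal (h.norm_inner_sum_sum_smul_bop_mul_bop_add_le hT B Ψ)).trans ?_
  rw [ENNReal.ofReal_mul (Real.sqrt_nonneg _)]
  gcongr
  rw [ENNReal.ofReal_add (by positivity) (by positivity),
    ENNReal.ofReal_add (by positivity) (by positivity), ENNReal.ofReal_pow (norm_nonneg _),
    ofReal_norm]
  calc _ ≤ ‖Ψ‖ₑ ^ 2 + ∑' q, ‖a q Ψ‖ₑ ^ 2 + ∑' q, ‖a q Ψ‖ₑ ^ 2 := by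
        gcongr
        · exact ofReal_sum_norm_sq_le_tsum (fun q => a q Ψ) Function.injective_id _
        · exact ofReal_sum_norm_sq_le_tsum (fun q => a q Ψ) neg_injective _
    _ ≤ ‖Ψ‖ₑ ^ 2 + ∑' q, ‖a q Ψ‖ₑ ^ 2 + ∑' q, ‖a q Ψ‖ₑ ^ 2 + ‖Ψ‖ₑ ^ 2 := le_self_add
    _ = _ := by ring

end CAR

theorem stmt8_general {H : Type*} [NormedAddCommGroup H] [InnerProductSpace ℂ H] [CompleteSpace H]
    (kF : ℝ) (a : Z3 → H →L[ℂ] H) (hCAR : CAR a)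
    (A : Z3 → Z3 → Z3 → ℂ) :
    ∀ Ψ : H,
      ((‖⟪Ψ, Q1c kF a A Ψ⟫‖₊ : ENNReal)
        ≤ 2 * (∑' ℓ : Z3, ENNReal.ofReal (normHSc kF ℓ (A ℓ)))
            * ∑' q : Z3, (‖a q Ψ‖₊ : ENNReal) ^ 2) ∧
      ((‖⟪Ψ, Q2c kF a A Ψ⟫‖₊ : ENNReal)
        ≤ 2 * (∑' ℓ : Z3, ENNReal.ofReal (normHSc kF ℓ (A ℓ)))
            * ((∑' q : Z3, (‖a q Ψ‖₊ : ENNReal) ^ 2) + (‖Ψ‖₊ : ENNReal) ^ 2)) := by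
  intro Ψ
  simp only [← enorm_eq_nnnorm]
  constructor
  · rw [Q1c_eq_tsum, smul_apply, inner_smul_right, enorm_mul, mul_assoc, ← ENNReal.tsum_mul_right]
    gcongr
    · rw [← ofReal_norm]
      norm_num
    · exact (enorm_inner_tsum_apply_le _ Ψ).trans
        (ENNReal.tsum_le_tsum fun ℓ => hCAR.enorm_inner_lens_sum_bopS_mul_bop_le kF ℓ (A ℓ) Ψ)
  · rw [Q2c_eq_tsum, mul_comm 2, mul_assoc, ← ENNReal.tsum_mul_right]
    exact (enorm_inner_tsum_apply_le _ Ψ).trans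
      (ENNReal.tsum_le_tsum fun ℓ => hCAR.enorm_inner_lens_sum_bop_mul_bop_add_le kF ℓ (A ℓ) Ψ)

/-- Quadratic-operator estimates in terms of the number operator (Lemma `lem:estQ2`):
`|⟨Ψ,Q₁(A)Ψ⟩| ≤ 2 (Σ_ℓ ‖A(ℓ)‖_HS) ⟨Ψ,𝒩Ψ⟩` and
`|⟨Ψ,Q₂(A)Ψ⟩| ≤ 2 (Σ_ℓ ‖A(ℓ)‖_HS) ⟨Ψ,(𝒩+1)Ψ⟩`, with values in `[0,∞]`. -/
theorem stmt8 {H : Type*} [NormedAddCommGroup H] [InnerProductSpace ℂ H] [CompleteSpace H]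
    (kF : ℝ) (hkF : 0 < kF) (a : Z3 → H →L[ℂ] H) (hCAR : CAR a)
    (A : Z3 → Z3 → Z3 → ℂ)
    (hAsymm : ∀ ℓ r s : Z3, A ℓ r s = A ℓ s r)
    (hAsupp : ∀ ℓ r s : Z3, (r ∉ lens kF ℓ ∨ s ∉ lens kF ℓ) → A ℓ r s = 0) :
    ∀ Ψ : H,
      ((‖⟪Ψ, Q1c kF a A Ψ⟫‖₊ : ENNReal)
        ≤ 2 * (∑' ℓ : Z3, ENNReal.ofReal (normHSc kF ℓ (A ℓ)))
            * ∑' q : Z3, (‖a q Ψ‖₊ : ENNReal) ^ 2) ∧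
      ((‖⟪Ψ, Q2c kF a A Ψ⟫‖₊ : ENNReal)
        ≤ 2 * (∑' ℓ : Z3, ENNReal.ofReal (normHSc kF ℓ (A ℓ)))
            * ((∑' q : Z3, (‖a q Ψ‖₊ : ENNReal) ^ 2) + (‖Ψ‖₊ : ENNReal) ^ 2)) :=
  stmt8_general kF a hCAR A
end
end

section
/- Let H be a complex Hilbert space, (a_q)_{q∈ℤ³} a CAR family of bounded operators on H, K = (K(ℓ)) a family of real symmetric matrices on the lenses with K(−ℓ)_{−r,−s} = K(ℓ)_{r,s}, and S the associated quasi-bosonic Bogoliubov generator. Then for every q ∈ B_F^c: [S, a_q* a_q] + [S, a_{−q}* a_{−q}] = Q₂( {K, P̃^q} ), where P̃^q := (1/2)(P^q + P^{−q}) and {K, P̃^q} denotes the family ℓ ↦ K(ℓ)P̃^q(ℓ) + P̃^q(ℓ)K(ℓ). -/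
open scoped BigOperators
open MeasureTheory

noncomputable section

attribute [local instance] Classical.propDecidable

variable {H : Type*} [NormedAddCommGroup H] [InnerProductSpace ℂ H] [CompleteSpace H]

local postfix:max "†" => ContinuousLinearMap.adjoint

local notation "⟪" x ", " y "⟫" => @inner ℂ _ _ x y

/-- The quasi-bosonic Bogoliubov generator
`S = (1/2) Σ_ℓ Σ_{r,s∈L_ℓ} K(ℓ)_{r,s} (b_r(ℓ) b_{−s}(−ℓ) − b_{−s}^*(−ℓ) b_r^*(ℓ))`. -/
def Sgen (kF : ℝ) (a : Z3 → H →L[ℂ] H) (K : Z3 → Z3 → Z3 → ℝ) : H →L[ℂ] H :=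
  (1 / 2 : ℂ) • ∑' ℓ : Z3, ∑' r : Z3, ∑' s : Z3,
    (if ℓ ≠ 0 ∧ r ∈ lens kF ℓ ∧ s ∈ lens kF ℓ then ((K ℓ r s : ℝ) : ℂ) else 0) •
      (bop a ℓ r * bop a (-ℓ) (-s) - bopS a (-ℓ) (-s) * bopS a ℓ r)

/-- The bosonization error operator
`𝓔_p(k) = (1/2) Σ_ℓ Σ_{r,s∈L_ℓ} K(ℓ)_{r,s} {ε_{r,p}(ℓ,k), b_{−s}(−ℓ)}`. -/
def calE (kF : ℝ) (a : Z3 → H →L[ℂ] H) (K : Z3 → Z3 → Z3 → ℝ) (k p : Z3) : H →L[ℂ] H :=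
  (1 / 2 : ℂ) • ∑' ℓ : Z3, ∑' r : Z3, ∑' s : Z3,
    (if ℓ ≠ 0 ∧ r ∈ lens kF ℓ ∧ s ∈ lens kF ℓ then ((K ℓ r s : ℝ) : ℂ) else 0) •
      (epsOp a ℓ k r p * bop a (-ℓ) (-s) + bop a (-ℓ) (-s) * epsOp a ℓ k r p)

/-- The quadratic quasi-bosonic operator `Q₁(A) = 2 Σ_ℓ Σ_{r,s∈L_ℓ} A(ℓ)_{r,s} b_r^*(ℓ) b_s(ℓ)`. -/
def Q1 (kF : ℝ) (a : Z3 → H →L[ℂ] H) (A : Z3 → Z3 → Z3 → ℝ) : H →L[ℂ] H :=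
  (2 : ℂ) • ∑' ℓ : Z3, ∑' r : Z3, ∑' s : Z3,
    (if ℓ ≠ 0 ∧ r ∈ lens kF ℓ ∧ s ∈ lens kF ℓ then ((A ℓ r s : ℝ) : ℂ) else 0) •
      (bopS a ℓ r * bop a ℓ s)

/-- The quadratic quasi-bosonic operator
`Q₂(A) = Σ_ℓ Σ_{r,s∈L_ℓ} A(ℓ)_{r,s} (b_r(ℓ) b_{−s}(−ℓ) + b_{−s}^*(−ℓ) b_r^*(ℓ))`. -/
def Q2 (kF : ℝ) (a : Z3 → H →L[ℂ] H) (A : Z3 → Z3 → Z3 → ℝ) : H →L[ℂ] H :=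
  ∑' ℓ : Z3, ∑' r : Z3, ∑' s : Z3,
    (if ℓ ≠ 0 ∧ r ∈ lens kF ℓ ∧ s ∈ lens kF ℓ then ((A ℓ r s : ℝ) : ℂ) else 0) •
      (bop a ℓ r * bop a (-ℓ) (-s) + bopS a (-ℓ) (-s) * bopS a ℓ r)

/-- Product of two real matrices realized as functions on `ℤ³ × ℤ³`. -/
def matMulR (A B : Z3 → Z3 → ℝ) : Z3 → Z3 → ℝ := fun r s => ∑' t : Z3, A r t * B t s

/-- The anticommutator family `{A,K}(ℓ) = A(ℓ)K(ℓ) + K(ℓ)A(ℓ)`. -/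
def anticommFam (A K : Z3 → Z3 → Z3 → ℝ) : Z3 → Z3 → Z3 → ℝ :=
  fun ℓ r s => matMulR (A ℓ) (K ℓ) r s + matMulR (K ℓ) (A ℓ) r s

/-- The bosonization error operator `E_{Q₁}(A)`. -/
def EQ1 (kF : ℝ) (a : Z3 → H →L[ℂ] H) (K A : Z3 → Z3 → Z3 → ℝ) : H →L[ℂ] H :=
  (2 : ℂ) • ∑' ℓ : Z3, ∑' r : Z3, ∑' s : Z3,
    (if ℓ ≠ 0 ∧ r ∈ lens kF ℓ ∧ s ∈ lens kF ℓ then ((A ℓ r s : ℝ) : ℂ) else 0) •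
      (calE kF a K ℓ r * bop a ℓ s + bopS a ℓ s * (calE kF a K ℓ r)†)

/-- The bosonization error operator `E_{Q₂}(A)`. -/
def EQ2 (kF : ℝ) (a : Z3 → H →L[ℂ] H) (K A : Z3 → Z3 → Z3 → ℝ) : H →L[ℂ] H :=
  ∑' ℓ : Z3, ∑' r : Z3, ∑' s : Z3,
    (if ℓ ≠ 0 ∧ r ∈ lens kF ℓ ∧ s ∈ lens kF ℓ then (1 : ℂ) else 0) •
      (((A ℓ r s : ℝ) : ℂ) •
          (((calE kF a K ℓ r)† * bop a (-ℓ) (-s) + bop a (-ℓ) (-s) * (calE kF a K ℓ r)†)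
            + (bopS a (-ℓ) (-s) * calE kF a K ℓ r + calE kF a K ℓ r * bopS a (-ℓ) (-s)))
        + ((anticommFam A K ℓ r s : ℝ) : ℂ) • epsOp a ℓ ℓ r s)

/-- The iterated anticommutator family `Θ_K^n(A)`: `Θ_K^0(A) = A`,
`Θ_K^n(A)(ℓ) = K(ℓ)Θ_K^{n−1}(A)(ℓ) + Θ_K^{n−1}(A)(ℓ)K(ℓ)`. -/
def Theta (K : Z3 → Z3 → Z3 → ℝ) : ℕ → (Z3 → Z3 → Z3 → ℝ) → Z3 → Z3 → Z3 → ℝ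
  | 0, A => A
  | n + 1, A => anticommFam (Theta K n A) K

/-- The rank-one family `P^q(ℓ)_{r,s} = δ_{q,r} δ_{q,s}` for `q ∈ L_ℓ` (and `0` otherwise). -/
def Pq (kF : ℝ) (q : Z3) : Z3 → Z3 → Z3 → ℝ :=
  fun ℓ r s => if q ∈ lens kF ℓ ∧ r = q ∧ s = q then 1 else 0

/-- The symmetrized rank-one family `P̃^q = (P^q + P^{−q})/2`. -/
def Ptilde (kF : ℝ) (q : Z3) : Z3 → Z3 → Z3 → ℝ :=
  fun ℓ r s => (1 / 2) * (Pq kF q ℓ r s + Pq kF (-q) ℓ r s)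

/-! ### Auxiliary lemmas -/

lemma nsq_neg (p : Z3) : nsq (-p) = nsq p := by
  unfold nsq
  refine Finset.sum_congr rfl fun i _ => ?_
  simp only [Pi.neg_apply, Int.cast_neg, neg_sq]

lemma BF_neg {kF : ℝ} {p : Z3} (h : p ∈ BF kF) : -p ∈ BF kF := by
  simpa [BF, nsq_neg] using h

lemma q_ne_neg {kF : ℝ} (hkF : 0 < kF) {q : Z3} (hq : q ∉ BF kF) : q ≠ -q := by
  intro h
  apply hq
  have hq0 : q = 0 := by
    funext i
    have := congrFun h i
    simp only [Pi.neg_apply] at this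
    simp only [Pi.zero_apply]
    omega
  rw [hq0]
  show nsq 0 ≤ kF ^ 2
  have : nsq 0 = 0 := by simp [nsq]
  rw [this]
  positivity

section CARlemmas

variable {H : Type*} [NormedAddCommGroup H] [InnerProductSpace ℂ H] [CompleteSpace H]
  {a : Z3 → H →L[ℂ] H}

lemma self_anticomm_zero {X : H →L[ℂ] H} (h : X + X = 0) : X = 0 := by
  have h2 : (2 : ℂ) • X = 0 := by rw [two_smul]; exact h
  simpa using h2

lemma aSaS (h : CAR a) (q p : Z3) : (a q)† * (a p)† + (a p)† * (a q)† = 0 := by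
  have h1 := congrArg star (h.1 p q)
  simp only [star_add, star_mul, star_zero, ContinuousLinearMap.star_eq_adjoint] at h1
  exact h1

lemma comm_N_a (h : CAR a) (q p : Z3) :
    ((a q)† * a q) * a p
      = a p * ((a q)† * a q) - (if p = q then (1 : ℂ) else 0) • a p := by
  by_cases hpq : p = q
  · subst hpq
    have h1 : a p * (a p)† = 1 - (a p)† * a p := eq_sub_of_add_eq (by simpa using h.2 p p)
    have h0 : a p * a p = 0 := self_anticomm_zero (h.1 p p)
    have hL : ((a p)† * a p) * a p = 0 := by rw [mul_assoc, h0, mul_zero]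
    have hR : a p * ((a p)† * a p) = a p := by
      rw [← mul_assoc, h1, sub_mul, one_mul, mul_assoc, h0, mul_zero, sub_zero]
    rw [hL, hR, if_pos rfl, one_smul, sub_self]
  · have h1 : a q * a p = -(a p * a q) := eq_neg_of_add_eq_zero_left (h.1 q p)
    have h2 : (a q)† * a p = -(a p * (a q)†) := by
      have h3 := h.2 p q
      rw [if_neg hpq] at h3
      exact eq_neg_of_add_eq_zero_right h3
    rw [if_neg hpq, zero_smul, sub_zero, mul_assoc, h1, mul_neg, ← mul_assoc, h2,
      neg_mul, neg_neg, mul_assoc]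

lemma comm_N_aS (h : CAR a) (q p : Z3) :
    ((a q)† * a q) * (a p)†
      = (a p)† * ((a q)† * a q) - (-(if p = q then (1 : ℂ) else 0)) • (a p)† := by
  by_cases hpq : p = q
  · subst hpq
    have h1 : a p * (a p)† = 1 - (a p)† * a p := eq_sub_of_add_eq (by simpa using h.2 p p)
    have h0 : (a p)† * (a p)† = 0 := self_anticomm_zero (aSaS h p p)
    have hL : ((a p)† * a p) * (a p)† = (a p)† := by
      rw [mul_assoc, h1, mul_sub, mul_one, ← mul_assoc, h0, zero_mul, sub_zero]
    have hR : (a p)† * ((a p)† * a p) = 0 := by rw [← mul_assoc, h0, zero_mul]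
    rw [hL, hR, if_pos rfl]
    simp
  · have h2 : a q * (a p)† = -((a p)† * a q) := by
      have h3 := h.2 q p
      rw [if_neg (Ne.symm hpq)] at h3
      exact eq_neg_of_add_eq_zero_left h3
    have h3 : (a q)† * (a p)† = -((a p)† * (a q)†) := eq_neg_of_add_eq_zero_left (aSaS h q p)
    rw [if_neg hpq, neg_zero, zero_smul, sub_zero, mul_assoc, h2, mul_neg, ← mul_assoc, h3,
      neg_mul, neg_neg, mul_assoc]

lemma leib {N X Y : H →L[ℂ] H} {c d : ℂ}
    (hX : N * X = X * N - c • X) (hY : N * Y = Y * N - d • Y) :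
    N * (X * Y) = (X * Y) * N - (c + d) • (X * Y) := by
  rw [← mul_assoc, hX, sub_mul, mul_assoc, hY, mul_sub, mul_smul_comm, smul_mul_assoc,
    add_smul, mul_assoc]
  abel

lemma comm_N_bop (h : CAR a) (q k p : Z3) :
    ((a q)† * a q) * bop a k p
      = bop a k p * ((a q)† * a q)
        - (((if p - k = q then 1 else 0) + (if p = q then 1 else 0)) : ℂ) • bop a k p :=
  leib (comm_N_a h q (p - k)) (comm_N_a h q p)

lemma comm_N_bopS (h : CAR a) (q k p : Z3) :
    ((a q)† * a q) * bopS a k p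
      = bopS a k p * ((a q)† * a q)
        - ((-(if p = q then 1 else 0) + -(if p - k = q then 1 else 0)) : ℂ) • bopS a k p :=
  leib (comm_N_aS h q p) (comm_N_aS h q (p - k))

end CARlemmas

lemma comm_T_reduced {H : Type*} [NormedAddCommGroup H] [InnerProductSpace ℂ H]
    [CompleteSpace H] {a : Z3 → H →L[ℂ] H} (h : CAR a) {kF : ℝ} {q : Z3} (hq : q ∉ BF kF)
    {ℓ r s : Z3} (hr : r ∈ lens kF ℓ) (hs : s ∈ lens kF ℓ) :
    (bop a ℓ r * bop a (-ℓ) (-s) - bopS a (-ℓ) (-s) * bopS a ℓ r) * ((a q)† * a q)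
      - ((a q)† * a q) * (bop a ℓ r * bop a (-ℓ) (-s) - bopS a (-ℓ) (-s) * bopS a ℓ r)
    = (((if r = q then 1 else 0) + (if s = -q then 1 else 0) : ℂ))
        • (bop a ℓ r * bop a (-ℓ) (-s) + bopS a (-ℓ) (-s) * bopS a ℓ r) := by
  have hx := leib (comm_N_bop h q ℓ r) (comm_N_bop h q (-ℓ) (-s))
  have hy := leib (comm_N_bopS h q (-ℓ) (-s)) (comm_N_bopS h q ℓ r)
  have e1 : (if r - ℓ = q then (1:ℂ) else 0) = 0 := by
    rw [if_neg]
    intro hh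
    exact hq (hh ▸ hr.2)
  have e2 : (if -s - -ℓ = q then (1:ℂ) else 0) = 0 := by
    rw [if_neg]
    intro hh
    apply hq
    rw [← hh]
    have hrw : -s - -ℓ = -(s - ℓ) := by abel
    rw [hrw]
    exact BF_neg hs.2
  have e3 : (if -s = q then (1:ℂ) else 0) = (if s = -q then 1 else 0) := by
    simp [neg_eq_iff_eq_neg]
  rw [e1, e2, e3] at hx hy
  have hc1 : ((0 + (if r = q then (1:ℂ) else 0)) + (0 + (if s = -q then 1 else 0)))
      = ((if r = q then (1:ℂ) else 0) + (if s = -q then 1 else 0)) := by ring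
  have hc2 : ((-(if s = -q then (1:ℂ) else 0) + -0) + (-(if r = q then (1:ℂ) else 0) + -0))
      = -(((if r = q then (1:ℂ) else 0) + (if s = -q then 1 else 0))) := by ring
  rw [hc1] at hx
  rw [hc2, neg_smul, sub_neg_eq_add] at hy
  rw [sub_mul, mul_sub, hx, hy, smul_add]
  abel

lemma coeff_eq {kF : ℝ} (hkF : 0 < kF) {q : Z3} (hq : q ∉ BF kF)
    (K : Z3 → Z3 → Z3 → ℝ) {ℓ r s : Z3} (hr : r ∈ lens kF ℓ) (hs : s ∈ lens kF ℓ) :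
    anticommFam K (Ptilde kF q) ℓ r s
      = (1/2) * K ℓ r s * (((if r = q then 1 else 0) + (if r = -q then 1 else 0))
          + ((if s = q then 1 else 0) + (if s = -q then 1 else 0))) := by
  have hqn : q ≠ -q := q_ne_neg hkF hq
  have h1 : (∑' t, K ℓ r t * Ptilde kF q ℓ t s)
      = K ℓ r q * Ptilde kF q ℓ q s + K ℓ r (-q) * Ptilde kF q ℓ (-q) s := by
    rw [tsum_eq_sum (s := ({q, -q} : Finset Z3)) ?_, Finset.sum_pair hqn]
    intro t ht
    simp only [Finset.mem_insert, Finset.mem_singleton, not_or] at ht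
    simp [Ptilde, Pq, ht.1, ht.2]
  have h2 : (∑' t, Ptilde kF q ℓ r t * K ℓ t s)
      = Ptilde kF q ℓ r q * K ℓ q s + Ptilde kF q ℓ r (-q) * K ℓ (-q) s := by
    rw [tsum_eq_sum (s := ({q, -q} : Finset Z3)) ?_, Finset.sum_pair hqn]
    intro t ht
    simp only [Finset.mem_insert, Finset.mem_singleton, not_or] at ht
    simp [Ptilde, Pq, ht.1, ht.2]
  have e1 : K ℓ r q * Ptilde kF q ℓ q s = (1/2) * (K ℓ r s * (if s = q then 1 else 0)) := by
    by_cases hc : s = q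
    · subst hc
      simp [Ptilde, Pq, hs, hqn, Ne.symm hqn, mul_comm]
    · simp [Ptilde, Pq, hc, hqn, Ne.symm hqn, mul_comm]
  have e2 : K ℓ r (-q) * Ptilde kF q ℓ (-q) s
      = (1/2) * (K ℓ r s * (if s = -q then 1 else 0)) := by
    by_cases hc : s = -q
    · subst hc
      simp [Ptilde, Pq, hs, hqn, Ne.symm hqn, mul_comm]
    · simp [Ptilde, Pq, hc, hqn, Ne.symm hqn, mul_comm]
  have e3 : Ptilde kF q ℓ r q * K ℓ q s = (1/2) * ((if r = q then 1 else 0) * K ℓ r s) := by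
    by_cases hc : r = q
    · subst hc
      simp [Ptilde, Pq, hr, hqn, Ne.symm hqn, mul_comm]
    · simp [Ptilde, Pq, hc, hqn, Ne.symm hqn, mul_comm]
  have e4 : Ptilde kF q ℓ r (-q) * K ℓ (-q) s
      = (1/2) * ((if r = -q then 1 else 0) * K ℓ r s) := by
    by_cases hc : r = -q
    · subst hc
      simp [Ptilde, Pq, hr, hqn, Ne.symm hqn, mul_comm]
    · simp [Ptilde, Pq, hc, hqn, Ne.symm hqn, mul_comm]
  show matMulR (K ℓ) (Ptilde kF q ℓ) r s + matMulR (Ptilde kF q ℓ) (K ℓ) r s = _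
  unfold matMulR
  rw [h1, h2, e1, e2, e3, e4]
  ring

lemma key3 {H : Type*} [NormedAddCommGroup H] [InnerProductSpace ℂ H] [CompleteSpace H]
    (kF : ℝ) (K : Z3 → Z3 → Z3 → ℝ) (hKfin : {ℓ : Z3 | K ℓ ≠ 0}.Finite)
    (F : Z3 → Z3 → Z3 → (H →L[ℂ] H))
    (h1 : ∀ ℓ, K ℓ = 0 → ∀ r s, F ℓ r s = 0)
    (h2 : ∀ ℓ r s, r ∉ lens kF ℓ → F ℓ r s = 0)
    (h3 : ∀ ℓ r s, s ∉ lens kF ℓ → F ℓ r s = 0) :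
    (∑' ℓ, ∑' r, ∑' s, F ℓ r s)
      = ∑ ℓ ∈ hKfin.toFinset, ∑ r ∈ (lens_finite kF ℓ).toFinset,
          ∑ s ∈ (lens_finite kF ℓ).toFinset, F ℓ r s := by
  have hout : ∀ ℓ ∉ hKfin.toFinset, (∑' r, ∑' s, F ℓ r s) = 0 := by
    intro ℓ hℓ
    have hK0 : K ℓ = 0 := by
      by_contra hne
      exact hℓ (hKfin.mem_toFinset.mpr hne)
    simp [h1 ℓ hK0]
  rw [tsum_eq_sum hout]
  refine Finset.sum_congr rfl fun ℓ _ => ?_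
  have hmid : ∀ r ∉ (lens_finite kF ℓ).toFinset, (∑' s, F ℓ r s) = 0 := by
    intro r hrr
    have : r ∉ lens kF ℓ := fun hmem => hrr ((lens_finite kF ℓ).mem_toFinset.mpr hmem)
    simp [h2 ℓ _ _ this]
  rw [tsum_eq_sum hmid]
  refine Finset.sum_congr rfl fun r _ => ?_
  exact tsum_eq_sum fun s hss =>
    h3 ℓ r s fun hmem => hss ((lens_finite kF ℓ).mem_toFinset.mpr hmem)

lemma perterm {H : Type*} [NormedAddCommGroup H] [InnerProductSpace ℂ H] [CompleteSpace H]
    {kF : ℝ} (hkF : 0 < kF) {a : Z3 → H →L[ℂ] H} (h : CAR a)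
    (K : Z3 → Z3 → Z3 → ℝ) {q : Z3} (hq : q ∉ BF kF) (ℓ r s : Z3) :
    (1/2 : ℂ) • (((if ℓ ≠ 0 ∧ r ∈ lens kF ℓ ∧ s ∈ lens kF ℓ then ((K ℓ r s : ℝ) : ℂ) else 0) •
          (bop a ℓ r * bop a (-ℓ) (-s) - bopS a (-ℓ) (-s) * bopS a ℓ r)) * ((a q)† * a q)
        - ((a q)† * a q) *
          ((if ℓ ≠ 0 ∧ r ∈ lens kF ℓ ∧ s ∈ lens kF ℓ then ((K ℓ r s : ℝ) : ℂ) else 0) •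
            (bop a ℓ r * bop a (-ℓ) (-s) - bopS a (-ℓ) (-s) * bopS a ℓ r)))
      + (1/2 : ℂ) • (((if ℓ ≠ 0 ∧ r ∈ lens kF ℓ ∧ s ∈ lens kF ℓ then ((K ℓ r s : ℝ) : ℂ) else 0) •
          (bop a ℓ r * bop a (-ℓ) (-s) - bopS a (-ℓ) (-s) * bopS a ℓ r)) * ((a (-q))† * a (-q))
        - ((a (-q))† * a (-q)) *
          ((if ℓ ≠ 0 ∧ r ∈ lens kF ℓ ∧ s ∈ lens kF ℓ then ((K ℓ r s : ℝ) : ℂ) else 0) •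
            (bop a ℓ r * bop a (-ℓ) (-s) - bopS a (-ℓ) (-s) * bopS a ℓ r)))
    = (if ℓ ≠ 0 ∧ r ∈ lens kF ℓ ∧ s ∈ lens kF ℓ
        then ((anticommFam K (Ptilde kF q) ℓ r s : ℝ) : ℂ) else 0) •
        (bop a ℓ r * bop a (-ℓ) (-s) + bopS a (-ℓ) (-s) * bopS a ℓ r) := by
  by_cases hind : ℓ ≠ 0 ∧ r ∈ lens kF ℓ ∧ s ∈ lens kF ℓ
  · obtain ⟨hl0, hr, hs⟩ := hind
    have hmq : -q ∉ BF kF := fun hc => hq (by simpa using BF_neg hc)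
    rw [if_pos ⟨hl0, hr, hs⟩, if_pos ⟨hl0, hr, hs⟩]
    have hT1 := comm_T_reduced h hq hr hs
    have hT2 := comm_T_reduced h hmq hr hs
    simp only [neg_neg] at hT2
    rw [smul_mul_assoc, mul_smul_comm, ← smul_sub, hT1,
      smul_mul_assoc, mul_smul_comm, ← smul_sub, hT2,
      ]
    simp only [smul_smul]
    rw [← add_smul]
    congr 1
    rw [coeff_eq hkF hq K hr hs]
    push_cast [apply_ite ((↑) : ℝ → ℂ)]
    ring
  · rw [if_neg hind, if_neg hind]
    simp

lemma expand_lemma {H : Type*} [NormedAddCommGroup H] [InnerProductSpace ℂ H] [CompleteSpace H]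
    (A : Finset Z3) (B : Z3 → Finset Z3) (F : Z3 → Z3 → Z3 → (H →L[ℂ] H)) (N : H →L[ℂ] H) :
    ((1/2 : ℂ) • ∑ ℓ ∈ A, ∑ r ∈ B ℓ, ∑ s ∈ B ℓ, F ℓ r s) * N
      - N * ((1/2 : ℂ) • ∑ ℓ ∈ A, ∑ r ∈ B ℓ, ∑ s ∈ B ℓ, F ℓ r s)
    = ∑ ℓ ∈ A, ∑ r ∈ B ℓ, ∑ s ∈ B ℓ, (1/2 : ℂ) • (F ℓ r s * N - N * F ℓ r s) := by
  simp only [smul_mul_assoc, mul_smul_comm, Finset.sum_mul, Finset.mul_sum, ← smul_sub,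
    ← Finset.sum_sub_distrib, Finset.smul_sum]

/-- The first commutator in the Duhamel expansion (Eq. `eq:firstcommutator`):
`[S, a_q^* a_q] + [S, a_{−q}^* a_{−q}] = Q₂({K, P̃^q})`. -/
theorem stmt12 {H : Type*} [NormedAddCommGroup H] [InnerProductSpace ℂ H] [CompleteSpace H]
    (kF : ℝ) (hkF : 0 < kF) (a : Z3 → H →L[ℂ] H) (hCAR : CAR a)
    (K : Z3 → Z3 → Z3 → ℝ)
    (hKsymm : ∀ ℓ r s : Z3, K ℓ r s = K ℓ s r)
    (hKsupp : ∀ ℓ r s : Z3, (r ∉ lens kF ℓ ∨ s ∉ lens kF ℓ) → K ℓ r s = 0)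
    (hKrefl : ∀ ℓ r s : Z3, K (-ℓ) (-r) (-s) = K ℓ r s)
    (hKfin : {ℓ : Z3 | K ℓ ≠ 0}.Finite) :
    ∀ q : Z3, q ∉ BF kF →
      (Sgen kF a K * ((a q)† * a q) - ((a q)† * a q) * Sgen kF a K)
        + (Sgen kF a K * ((a (-q))† * a (-q)) - ((a (-q))† * a (-q)) * Sgen kF a K)
      = Q2 kF a (anticommFam K (Ptilde kF q)) := by
  intro q hq
  have hS : Sgen kF a K
      = (1/2 : ℂ) • ∑ ℓ ∈ hKfin.toFinset, ∑ r ∈ (lens_finite kF ℓ).toFinset,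
          ∑ s ∈ (lens_finite kF ℓ).toFinset,
          (if ℓ ≠ 0 ∧ r ∈ lens kF ℓ ∧ s ∈ lens kF ℓ then ((K ℓ r s : ℝ) : ℂ) else 0) •
            (bop a ℓ r * bop a (-ℓ) (-s) - bopS a (-ℓ) (-s) * bopS a ℓ r) := by
    unfold Sgen
    congr 1
    refine key3 kF K hKfin _ ?_ ?_ ?_
    · intro ℓ hK0 r s
      simp [hK0]
    · intro ℓ r s hrr
      simp [hrr]
    · intro ℓ r s hss
      simp [hss]
  have hQ : Q2 kF a (anticommFam K (Ptilde kF q))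
      = ∑ ℓ ∈ hKfin.toFinset, ∑ r ∈ (lens_finite kF ℓ).toFinset,
          ∑ s ∈ (lens_finite kF ℓ).toFinset,
          (if ℓ ≠ 0 ∧ r ∈ lens kF ℓ ∧ s ∈ lens kF ℓ
            then ((anticommFam K (Ptilde kF q) ℓ r s : ℝ) : ℂ) else 0) •
            (bop a ℓ r * bop a (-ℓ) (-s) + bopS a (-ℓ) (-s) * bopS a ℓ r) := by
    refine key3 kF K hKfin _ ?_ ?_ ?_
    · intro ℓ hK0 r s
      simp [anticommFam, matMulR, hK0]
    · intro ℓ r s hrr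
      simp [hrr]
    · intro ℓ r s hss
      simp [hss]
  rw [hS, hQ,
    expand_lemma hKfin.toFinset (fun ℓ => (lens_finite kF ℓ).toFinset)
      (fun ℓ r s => (if ℓ ≠ 0 ∧ r ∈ lens kF ℓ ∧ s ∈ lens kF ℓ then ((K ℓ r s : ℝ) : ℂ) else 0) •
        (bop a ℓ r * bop a (-ℓ) (-s) - bopS a (-ℓ) (-s) * bopS a ℓ r)) ((a q)† * a q),
    expand_lemma hKfin.toFinset (fun ℓ => (lens_finite kF ℓ).toFinset)
      (fun ℓ r s => (if ℓ ≠ 0 ∧ r ∈ lens kF ℓ ∧ s ∈ lens kF ℓ then ((K ℓ r s : ℝ) : ℂ) else 0) •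
        (bop a ℓ r * bop a (-ℓ) (-s) - bopS a (-ℓ) (-s) * bopS a ℓ r)) ((a (-q))† * a (-q)),
    ← Finset.sum_add_distrib]
  refine Finset.sum_congr rfl fun ℓ _ => ?_
  rw [← Finset.sum_add_distrib]
  refine Finset.sum_congr rfl fun r _ => ?_
  rw [← Finset.sum_add_distrib]
  refine Finset.sum_congr rfl fun s _ => ?_
  exact perterm hkF hCAR K hq ℓ r s
end
end

section
/- Let k_F ≥ 1, ℓ ∈ ℤ³∖{0}, and let c > 0, B > 0, 0 ≤ g ≤ B. Let K be a complex matrix on L_ℓ such that |(Kⁿ)_{r,s}| ≤ (c·g)ⁿ · k_F^{-1} · (λ_{ℓ,r}+λ_{ℓ,s})^{-1} for all integers n ≥ 1 and all r,s ∈ L_ℓ. Then there exists a constant C > 0 depending only on c and B such that | (sinh K)_{r,s} − K_{r,s} | ≤ C · g³ · k_F^{-1} · (λ_{ℓ,r}+λ_{ℓ,s})^{-1} for all r,s ∈ L_ℓ, where sinh K := Σ_{j≥0} K^{2j+1}/(2j+1)! is the matrix hyperbolic sine. -/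
open scoped BigOperators
open MeasureTheory

noncomputable section

attribute [local instance] Classical.propDecidable

/-- Product of two (lens-supported) matrices, realized as functions on `ℤ³ × ℤ³`. -/
def matMulC (A B : Z3 → Z3 → ℂ) : Z3 → Z3 → ℂ := fun r s => ∑' t : Z3, A r t * B t s

/-- `m`-th power of a matrix realized as a function on `ℤ³ × ℤ³`. -/
def matPowC (K : Z3 → Z3 → ℂ) : ℕ → Z3 → Z3 → ℂ
  | 0 => fun r s => if r = s then 1 else 0
  | n + 1 => matMulC K (matPowC K n)

/-!
Each term of `sinh K - K = Σ_{j ≥ 1} K^{2j+1}/(2j+1)!` is bounded entrywise by the corresponding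
term of `sinh (c g) - c g` times `k_F⁻¹ (λ_{ℓ,r} + λ_{ℓ,s})⁻¹`, and on `0 ≤ x ≤ M` the odd tail
obeys `sinh x - x ≤ x³ cosh M`; with `M = c B` this gives the constant `C = c³ cosh (c B)`.
-/

open scoped Nat

theorem Real.sinh_sub_self_le_pow_three_mul_cosh {x M : ℝ} (hx : 0 ≤ x) (hxM : x ≤ M) :
    sinh x - x ≤ x ^ 3 * cosh M := by
  have htail : HasSum (fun j : ℕ ↦ x ^ (2 * (j + 1) + 1) / (2 * (j + 1) + 1)!) (sinh x - x) := by
    simpa using (hasSum_nat_add_iff' 1).mpr (hasSum_sinh x)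
  refine hasSum_le (fun j ↦ ?_) htail ((hasSum_cosh M).mul_left (x ^ 3))
  have hpow : x ^ (2 * j) ≤ M ^ (2 * j) := pow_le_pow_left₀ hx hxM _
  have hfact : ((2 * j)! : ℝ) ≤ (2 * j + 3)! := by
    exact_mod_cast Nat.factorial_le (by omega)
  calc x ^ (2 * (j + 1) + 1) / (2 * (j + 1) + 1)! = x ^ 3 * x ^ (2 * j) / (2 * j + 3)! := by
        ring_nf
    _ ≤ x ^ 3 * M ^ (2 * j) / (2 * j)! := by
      gcongr
      exact mul_nonneg (pow_nonneg hx 3) (pow_nonneg (hx.trans hxM) _)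
    _ = x ^ 3 * (M ^ (2 * j) / (2 * j)!) := by ring

theorem norm_tsum_sub_zero_le_sinh_sub_self_mul {E : Type*} [NormedAddCommGroup E]
    [CompleteSpace E] {a : ℕ → E} {x D : ℝ}
    (ha : ∀ j, ‖a j‖ ≤ x ^ (2 * j + 1) / (2 * j + 1)! * D) :
    ‖∑' j, a j - a 0‖ ≤ (Real.sinh x - x) * D := by
  have hmajorant := (Real.hasSum_sinh x).mul_right D
  have hsum : Summable a := hmajorant.summable.of_norm_bounded ha
  have htail : HasSum (fun j ↦ x ^ (2 * (j + 1) + 1) / (2 * (j + 1) + 1)! * D)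
      ((Real.sinh x - x) * D) := by
    simpa [sub_mul] using (hasSum_nat_add_iff' 1).mpr hmajorant
  rw [hsum.tsum_eq_zero_add, add_sub_cancel_left]
  exact tsum_of_norm_bounded htail fun j ↦ ha (j + 1)

theorem matPowC_one (K : Z3 → Z3 → ℂ) (r s : Z3) : matPowC K 1 r s = K r s := by
  simp only [matPowC, matMulC, mul_ite, mul_one, mul_zero]
  exact tsum_ite_eq s (K r)

theorem lam_pos_of_mem_lens {kF : ℝ} {ℓ p : Z3} (hp : p ∈ lens kF ℓ) : 0 < lam ℓ p := by
  obtain ⟨hout, hin⟩ := hp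
  simp only [BF, Set.mem_ofPred_eq, not_le] at hout hin
  unfold lam
  linarith

/-- Comparison of the matrix hyperbolic sine with the matrix itself
(Lemma `lem:extract_nqex`, abstract form):
`|(sinh K)_{r,s} − K_{r,s}| ≤ C g³ k_F⁻¹ (λ_{ℓ,r} + λ_{ℓ,s})⁻¹`, where
`sinh K = Σ_{j≥0} K^{2j+1}/(2j+1)!`. -/
theorem stmt13 : ∀ c : ℝ, 0 < c → ∀ B : ℝ, 0 < B → ∃ C : ℝ, 0 < C ∧
    ∀ kF : ℝ, 1 ≤ kF → ∀ ℓ : Z3, ℓ ≠ 0 → ∀ g : ℝ, 0 ≤ g → g ≤ B →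
    ∀ K : Z3 → Z3 → ℂ,
      (∀ r s : Z3, (r ∉ lens kF ℓ ∨ s ∉ lens kF ℓ) → K r s = 0) →
      (∀ n : ℕ, 1 ≤ n → ∀ r ∈ lens kF ℓ, ∀ s ∈ lens kF ℓ,
        ‖matPowC K n r s‖ ≤ (c * g) ^ n * kF⁻¹ * (lam ℓ r + lam ℓ s)⁻¹) →
      ∀ r ∈ lens kF ℓ, ∀ s ∈ lens kF ℓ,
        ‖(∑' j : ℕ, ((Nat.factorial (2 * j + 1) : ℂ))⁻¹ * matPowC K (2 * j + 1) r s)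
            - K r s‖
          ≤ C * g ^ 3 * kF⁻¹ * (lam ℓ r + lam ℓ s)⁻¹ := by
  intro c hc B _
  refine ⟨c ^ 3 * Real.cosh (c * B), by positivity, ?_⟩
  intro kF hkF ℓ _ g hg hgB K _ hK r hr s hs
  set D := kF⁻¹ * (lam ℓ r + lam ℓ s)⁻¹
  have hD : 0 ≤ D := by
    have := lam_pos_of_mem_lens hr
    have := lam_pos_of_mem_lens hs
    positivity
  have hterm (j : ℕ) : ‖((2 * j + 1)! : ℂ)⁻¹ * matPowC K (2 * j + 1) r s‖ ≤
      (c * g) ^ (2 * j + 1) / (2 * j + 1)! * D := by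
    rw [norm_mul, norm_inv, Complex.norm_natCast, inv_mul_eq_div, div_mul_eq_mul_div,
      ← mul_assoc]
    gcongr
    exact hK _ (by omega) r hr s hs
  have hseries := norm_tsum_sub_zero_le_sinh_sub_self_mul hterm
  simp only [zero_add, Nat.factorial_one, Nat.cast_one, inv_one, one_mul, matPowC_one,
    mul_zero] at hseries
  calc _ ≤ (Real.sinh (c * g) - c * g) * D := hseries
    _ ≤ (c * g) ^ 3 * Real.cosh (c * B) * D := by
      gcongr
      exact Real.sinh_sub_self_le_pow_three_mul_cosh (by positivity) (by gcongr)
    _ = c ^ 3 * Real.cosh (c * B) * g ^ 3 * kF⁻¹ * (lam ℓ r + lam ℓ s)⁻¹ := by ring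
end
end

section
/- Let V̂ : ℤ³ → [0,∞) with Σ_{ℓ∈ℤ³∖{0}} V̂(ℓ) < ∞. Then there exists a constant C > 0 such that for all k_F ≥ 1 and all q ∈ B_F^c: |n^{RPA}(q)| ≤ C · k_F^{-1} · e(q)^{-1}. The same bound holds for q ∈ B_F when n^{RPA}(q) is defined by the interior formula, obtained by replacing 1_{L_ℓ}(q) by 1_{L_ℓ}(q+ℓ) and λ_{ℓ,q} by λ_{ℓ,q+ℓ}. -/
open scoped BigOperators
open MeasureTheory

noncomputable section

attribute [local instance] Classical.propDecidable

/-- The coupling coefficient `g_ℓ = k_F⁻¹ V̂(ℓ) / (2(2π)³)`. -/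
def gcoef (kF : ℝ) (V : Z3 → ℝ) (ℓ : Z3) : ℝ := kF⁻¹ * V ℓ / (2 * (2 * Real.pi) ^ 3)

/-- The random phase approximation contribution `n^{RPA}(q)` (Eq. `eq:nqb`). -/
def nRPA (kF : ℝ) (V : Z3 → ℝ) (q : Z3) : ℝ :=
  ∑' ℓ : Z3, if ℓ ≠ 0 ∧ q ∈ lens kF ℓ then
    (1 / Real.pi) * ∫ t in Set.Ioi (0 : ℝ),
      (gcoef kF V ℓ * (t ^ 2 - (lam ℓ q) ^ 2) * (((t ^ 2 + (lam ℓ q) ^ 2) ^ 2)⁻¹)) /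
        (1 + 2 * gcoef kF V ℓ *
          ∑' p : Z3, if p ∈ lens kF ℓ then lam ℓ p * (t ^ 2 + (lam ℓ p) ^ 2)⁻¹ else 0)
  else 0

/-- The interior (`q ∈ B_F`) variant of `n^{RPA}(q)` (Eq. `eq:inside`), obtained by
replacing `1_{L_ℓ}(q)` by `1_{L_ℓ}(q+ℓ)` and `λ_{ℓ,q}` by `λ_{ℓ,q+ℓ}`. -/
def nRPAin (kF : ℝ) (V : Z3 → ℝ) (q : Z3) : ℝ :=
  ∑' ℓ : Z3, if ℓ ≠ 0 ∧ q + ℓ ∈ lens kF ℓ then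
    (1 / Real.pi) * ∫ t in Set.Ioi (0 : ℝ),
      (gcoef kF V ℓ * (t ^ 2 - (lam ℓ (q + ℓ)) ^ 2) * (((t ^ 2 + (lam ℓ (q + ℓ)) ^ 2) ^ 2)⁻¹)) /
        (1 + 2 * gcoef kF V ℓ *
          ∑' p : Z3, if p ∈ lens kF ℓ then lam ℓ p * (t ^ 2 + (lam ℓ p) ^ 2)⁻¹ else 0)
  else 0

/-!
Each summand is bounded crudely but uniformly: the denominator `1 + 2 g_ℓ Σ_p λ_{ℓ,p}/(t² + λ_{ℓ,p}²)`
is at least `1` because `λ_{ℓ,p} ≥ 0` on the lens, and `|t² − λ²| ≤ t² + λ²`, so the `t`-integral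
is at most `g_ℓ ∫₀^∞ (t² + λ²)⁻¹ dt = π g_ℓ / (2λ)`. Since `|p|²` is an integer, the two
energies `e(q)` and `e(q − ℓ)` of a lens point `q` are at least `1/2` and add up to `2λ_{ℓ,q}`,
so `2λ_{ℓ,q}` dominates both. Summing `g_ℓ / e(q)` over `ℓ` then gives
`|n^{RPA}(q)| ≤ Σ_ℓ V̂(ℓ) / (2(2π)³ k_F e(q))`.
-/

open Real Set Filter Topology

section ArctanIntegral

variable {b : ℝ}

lemma hasDerivAt_inv_mul_arctan_div (hb : b ≠ 0) (x : ℝ) :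
    HasDerivAt (fun t => b⁻¹ * arctan (t / b)) ((x ^ 2 + b ^ 2)⁻¹) x := by
  have h := ((hasDerivAt_arctan (x / b)).comp x ((hasDerivAt_id x).div_const b)).const_mul b⁻¹
  refine h.congr_deriv ?_
  field_simp
  ring

lemma tendsto_inv_mul_arctan_div_atTop (hb : 0 < b) :
    Tendsto (fun t => b⁻¹ * arctan (t / b)) atTop (𝓝 (b⁻¹ * (π / 2))) :=
  ((tendsto_arctan_atTop.mono_right nhdsWithin_le_nhds).comp
    (tendsto_id.atTop_div_const hb)).const_mul _

lemma integrableOn_Ioi_inv_sq_add_sq (hb : 0 < b) :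
    IntegrableOn (fun t : ℝ => (t ^ 2 + b ^ 2)⁻¹) (Ioi 0) :=
  integrableOn_Ioi_deriv_of_nonneg' (fun x _ => hasDerivAt_inv_mul_arctan_div hb.ne' x)
    (fun _ _ => by positivity) (tendsto_inv_mul_arctan_div_atTop hb)

lemma integral_Ioi_inv_sq_add_sq (hb : 0 < b) :
    ∫ t in Ioi (0 : ℝ), (t ^ 2 + b ^ 2)⁻¹ = π / (2 * b) := by
  rw [integral_Ioi_of_hasDerivAt_of_tendsto' (fun x _ => hasDerivAt_inv_mul_arctan_div hb.ne' x)
    (integrableOn_Ioi_inv_sq_add_sq hb) (tendsto_inv_mul_arctan_div_atTop hb)]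
  simp only [zero_div, arctan_zero, mul_zero, sub_zero]
  rw [inv_mul_eq_div, div_div]

end ArctanIntegral

lemma abs_sq_sub_sq_mul_inv_sq_le (t b : ℝ) :
    |(t ^ 2 - b ^ 2) * ((t ^ 2 + b ^ 2) ^ 2)⁻¹| ≤ (t ^ 2 + b ^ 2)⁻¹ := by
  rw [abs_mul, abs_of_nonneg (by positivity : (0 : ℝ) ≤ ((t ^ 2 + b ^ 2) ^ 2)⁻¹)]
  calc |t ^ 2 - b ^ 2| * ((t ^ 2 + b ^ 2) ^ 2)⁻¹ ≤ (t ^ 2 + b ^ 2) * ((t ^ 2 + b ^ 2) ^ 2)⁻¹ := by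
        gcongr
        exact abs_le.2 ⟨by nlinarith [sq_nonneg t], by nlinarith [sq_nonneg b]⟩
    _ = (t ^ 2 + b ^ 2)⁻¹ := by
        rcases eq_or_ne (t ^ 2 + b ^ 2) 0 with h | h
        · simp [h]
        · field_simp

lemma abs_integral_Ioi_div_le {D : ℝ → ℝ} (hD : ∀ t, 1 ≤ D t) {g b : ℝ} (hg : 0 ≤ g)
    (hb : 0 < b) :
    |(1 / π) * ∫ t in Ioi (0 : ℝ), g * (t ^ 2 - b ^ 2) * ((t ^ 2 + b ^ 2) ^ 2)⁻¹ / D t|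
      ≤ g / (2 * b) := by
  have hpointwise : ∀ t, ‖g * (t ^ 2 - b ^ 2) * ((t ^ 2 + b ^ 2) ^ 2)⁻¹ / D t‖
      ≤ g * (t ^ 2 + b ^ 2)⁻¹ := by
    intro t
    rw [Real.norm_eq_abs, abs_div, abs_of_pos (one_pos.trans_le (hD t)), mul_assoc, abs_mul,
      abs_of_nonneg hg]
    calc g * |(t ^ 2 - b ^ 2) * ((t ^ 2 + b ^ 2) ^ 2)⁻¹| / D t
        ≤ g * |(t ^ 2 - b ^ 2) * ((t ^ 2 + b ^ 2) ^ 2)⁻¹| := div_le_self (by positivity) (hD t)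
      _ ≤ g * (t ^ 2 + b ^ 2)⁻¹ := by gcongr; exact abs_sq_sub_sq_mul_inv_sq_le t b
  calc |(1 / π) * ∫ t in Ioi (0 : ℝ), g * (t ^ 2 - b ^ 2) * ((t ^ 2 + b ^ 2) ^ 2)⁻¹ / D t|
      = (1 / π) * ‖∫ t in Ioi (0 : ℝ), g * (t ^ 2 - b ^ 2) * ((t ^ 2 + b ^ 2) ^ 2)⁻¹ / D t‖ := by
        rw [abs_mul, abs_of_pos (by positivity), Real.norm_eq_abs]
    _ ≤ (1 / π) * ∫ t in Ioi (0 : ℝ), g * (t ^ 2 + b ^ 2)⁻¹ := by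
        gcongr
        exact norm_integral_le_of_norm_le ((integrableOn_Ioi_inv_sq_add_sq hb).const_mul g)
          (ae_of_all _ hpointwise)
    _ = g / (2 * b) := by
        rw [integral_const_mul, integral_Ioi_inv_sq_add_sq hb]
        field_simp

lemma nsq_eq_intCast (p : Z3) : nsq p = ((∑ i, p i ^ 2 : ℤ) : ℝ) := by
  push_cast
  rfl

lemma nsq_add_one_le_of_lt {p r : Z3} (h : nsq p < nsq r) : nsq p + 1 ≤ nsq r := by
  rw [nsq_eq_intCast p, nsq_eq_intCast r] at *
  exact_mod_cast Int.add_one_le_of_lt (by exact_mod_cast h)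

lemma compl_BF_nonempty (kF : ℝ) : (BF kF)ᶜ.Nonempty := by
  set c : ℤ := ⌈kF ^ 2⌉ + 1
  have hc : kF ^ 2 + 1 ≤ c := by push_cast [c]; linarith [Int.le_ceil (kF ^ 2)]
  refine ⟨fun _ => c, ?_⟩
  simp only [BF, mem_compl_iff, mem_ofPred_eq, nsq, Fin.sum_univ_three, not_le]
  nlinarith [sq_nonneg kF]

lemma sInf_nsq_compl_le {kF : ℝ} {p : Z3} (hp : p ∉ BF kF) : sInf (nsq '' (BF kF)ᶜ) ≤ nsq p :=
  csInf_le ⟨0, by rintro _ ⟨r, -, rfl⟩; exact Finset.sum_nonneg fun i _ => sq_nonneg _⟩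
    ⟨p, hp, rfl⟩

lemma nsq_add_one_le_sInf {kF : ℝ} {p : Z3} (hp : p ∈ BF kF) :
    nsq p + 1 ≤ sInf (nsq '' (BF kF)ᶜ) := by
  refine le_csInf ((compl_BF_nonempty kF).image nsq) ?_
  rintro _ ⟨r, hr, rfl⟩
  exact nsq_add_one_le_of_lt (lt_of_le_of_lt hp (not_le.mp hr))

lemma efun_of_not_mem_BF {kF : ℝ} {p : Z3} (hp : p ∉ BF kF) :
    efun kF p = nsq p - sInf (nsq '' (BF kF)ᶜ) + 1 / 2 :=
  abs_of_pos (by linarith [sInf_nsq_compl_le hp])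

lemma efun_of_mem_BF {kF : ℝ} {p : Z3} (hp : p ∈ BF kF) :
    efun kF p = sInf (nsq '' (BF kF)ᶜ) - nsq p - 1 / 2 := by
  rw [efun, abs_of_neg (by linarith [nsq_add_one_le_sInf hp])]
  ring

lemma half_le_efun (kF : ℝ) (p : Z3) : 1 / 2 ≤ efun kF p := by
  by_cases hp : p ∈ BF kF
  · linarith [efun_of_mem_BF hp, nsq_add_one_le_sInf hp]
  · linarith [efun_of_not_mem_BF hp, sInf_nsq_compl_le hp]

lemma efun_add_efun_sub_eq {kF : ℝ} {ℓ p : Z3} (hp : p ∈ lens kF ℓ) :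
    efun kF p + efun kF (p - ℓ) = 2 * lam ℓ p := by
  rw [efun_of_not_mem_BF hp.1, efun_of_mem_BF hp.2, lam]
  ring

lemma efun_le_two_mul_lam {kF : ℝ} {ℓ p : Z3} (hp : p ∈ lens kF ℓ) :
    efun kF p ≤ 2 * lam ℓ p := by
  linarith [efun_add_efun_sub_eq hp, half_le_efun kF (p - ℓ)]

lemma efun_sub_le_two_mul_lam {kF : ℝ} {ℓ p : Z3} (hp : p ∈ lens kF ℓ) :
    efun kF (p - ℓ) ≤ 2 * lam ℓ p := by
  linarith [efun_add_efun_sub_eq hp, half_le_efun kF p]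

lemma lam_nonneg_of_mem_lens {kF : ℝ} {ℓ p : Z3} (hp : p ∈ lens kF ℓ) : 0 ≤ lam ℓ p := by
  linarith [efun_le_two_mul_lam hp, half_le_efun kF p]

lemma gcoef_nonneg {kF : ℝ} {V : Z3 → ℝ} {ℓ : Z3} (hkF : 0 ≤ kF) (hV : 0 ≤ V ℓ) :
    0 ≤ gcoef kF V ℓ := by
  unfold gcoef
  positivity

/-- The `ℓ`-th summand of `n^{RPA}(q)`, with `b` standing for `λ_{ℓ,q}` (or `λ_{ℓ,q+ℓ}` inside). -/
def rpaSummand (kF : ℝ) (V : Z3 → ℝ) (ℓ : Z3) (b : ℝ) : ℝ :=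
  (1 / π) * ∫ t in Ioi (0 : ℝ),
    (gcoef kF V ℓ * (t ^ 2 - b ^ 2) * (((t ^ 2 + b ^ 2) ^ 2)⁻¹)) /
      (1 + 2 * gcoef kF V ℓ *
        ∑' p : Z3, if p ∈ lens kF ℓ then lam ℓ p * (t ^ 2 + (lam ℓ p) ^ 2)⁻¹ else 0)

lemma abs_rpaSummand_le {kF b : ℝ} {V : Z3 → ℝ} {ℓ : Z3} (hkF : 0 ≤ kF) (hV : 0 ≤ V ℓ)
    (hb : 0 < b) : |rpaSummand kF V ℓ b| ≤ gcoef kF V ℓ / (2 * b) := by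
  refine abs_integral_Ioi_div_le (fun t => ?_) (gcoef_nonneg hkF hV) hb
  have hsum : 0 ≤ ∑' p : Z3, if p ∈ lens kF ℓ then lam ℓ p * (t ^ 2 + (lam ℓ p) ^ 2)⁻¹ else 0 :=
    tsum_nonneg fun p => by
      split_ifs with hp
      · exact mul_nonneg (lam_nonneg_of_mem_lens hp) (by positivity)
      · exact le_rfl
  have := gcoef_nonneg (ℓ := ℓ) hkF hV
  nlinarith

lemma abs_tsum_rpaSummand_le {V : Z3 → ℝ} (hV : ∀ ℓ, 0 ≤ V ℓ)
    (hsum : Summable (fun ℓ : Z3 => if ℓ ≠ 0 then V ℓ else 0)) {kF e C : ℝ} (hkF : 0 ≤ kF)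
    (he : 0 < e) (hC : (∑' ℓ : Z3, if ℓ ≠ 0 then V ℓ else 0) / (2 * (2 * π) ^ 3) ≤ C)
    (P : Z3 → Prop) (b : Z3 → ℝ) (hb : ∀ ℓ, P ℓ → e ≤ 2 * b ℓ) :
    |∑' ℓ, if ℓ ≠ 0 ∧ P ℓ then rpaSummand kF V ℓ (b ℓ) else 0| ≤ C * kF⁻¹ * e⁻¹ := by
  set c := kF⁻¹ * e⁻¹ / (2 * (2 * π) ^ 3)
  have hc : 0 ≤ c := by positivity
  have hterm : ∀ ℓ, ‖if ℓ ≠ 0 ∧ P ℓ then rpaSummand kF V ℓ (b ℓ) else 0‖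
      ≤ (if ℓ ≠ 0 then V ℓ else 0) * c := by
    intro ℓ
    rw [Real.norm_eq_abs]
    split_ifs with hℓ hℓ0 hℓ0
    · calc |rpaSummand kF V ℓ (b ℓ)| ≤ gcoef kF V ℓ / (2 * b ℓ) :=
            abs_rpaSummand_le hkF (hV ℓ) (by linarith [hb ℓ hℓ.2])
        _ ≤ gcoef kF V ℓ / e := div_le_div_of_nonneg_left (gcoef_nonneg hkF (hV ℓ)) he (hb ℓ hℓ.2)
        _ = V ℓ * c := by unfold gcoef; ring
    · exact absurd hℓ.1 hℓ0
    · simpa using mul_nonneg (hV ℓ) hc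
    · simp
  calc |∑' ℓ, if ℓ ≠ 0 ∧ P ℓ then rpaSummand kF V ℓ (b ℓ) else 0|
      ≤ (∑' ℓ : Z3, if ℓ ≠ 0 then V ℓ else 0) * c :=
        tsum_of_norm_bounded (hsum.hasSum.mul_right c) hterm
    _ = (∑' ℓ : Z3, if ℓ ≠ 0 then V ℓ else 0) / (2 * (2 * π) ^ 3) * kF⁻¹ * e⁻¹ := by ring
    _ ≤ C * kF⁻¹ * e⁻¹ := by gcongr

/-- Estimate for the RPA contribution (Lemma `lem:nqb_bounds`):
`|n^{RPA}(q)| ≤ C k_F⁻¹ e(q)⁻¹`, both outside and inside the Fermi ball. -/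
theorem stmt18 (V : Z3 → ℝ) (hV : ∀ ℓ : Z3, 0 ≤ V ℓ)
    (hsum : Summable (fun ℓ : Z3 => if ℓ ≠ 0 then V ℓ else 0)) :
    ∃ C : ℝ, 0 < C ∧ ∀ kF : ℝ, 1 ≤ kF → ∀ q : Z3,
      (q ∉ BF kF → |nRPA kF V q| ≤ C * kF⁻¹ * (efun kF q)⁻¹) ∧
      (q ∈ BF kF → |nRPAin kF V q| ≤ C * kF⁻¹ * (efun kF q)⁻¹) := by
  have hT : 0 ≤ ∑' ℓ : Z3, if ℓ ≠ 0 then V ℓ else 0 :=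
    tsum_nonneg fun ℓ => by split_ifs; exacts [hV ℓ, le_rfl]
  refine ⟨(∑' ℓ : Z3, if ℓ ≠ 0 then V ℓ else 0) / (2 * (2 * π) ^ 3) + 1, by positivity,
    fun kF hkF q => ⟨fun _ => ?_, fun _ => ?_⟩⟩
  all_goals have he : 0 < efun kF q := by linarith [half_le_efun kF q]
  · exact abs_tsum_rpaSummand_le hV hsum (by linarith) he (le_add_of_nonneg_right one_pos.le)
      (fun ℓ => q ∈ lens kF ℓ) (fun ℓ => lam ℓ q) fun ℓ hℓ => efun_le_two_mul_lam hℓ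
  · exact abs_tsum_rpaSummand_le hV hsum (by linarith) he (le_add_of_nonneg_right one_pos.le)
      (fun ℓ => q + ℓ ∈ lens kF ℓ) (fun ℓ => lam ℓ (q + ℓ))
      fun ℓ hℓ => by simpa using efun_sub_le_two_mul_lam hℓ
end
end
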